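/- arXiv:1702.07914 — 7 statements merged into one kernel-verified Lean document; each statement's English description precedes it below -/
import Mathlib

section
/- Let G be a chordal graph, Q a clique in G, and Z the vertex set of a connected component of G restricted to V \ Q. If every vertex of Q has a neighbor in Z, then there exists a vertex z in Z adjacent to every vertex of Q. -/
open SimpleGraph

/-- `f : Fin n → V` describes an induced cycle of length `n` in `G`. -/
def IsInducedCycleFun {V : Type*} (G : SimpleGraph V) (n : ℕ) (f : Fin n → V) : Prop :=
  Function.Injective f ∧
    ∀ i j : Fin n, G.Adj (f i) (f j) ↔ ((i.val + 1) % n = j.val ∨ (j.val + 1) % n = i.val)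

/-- `G` is chordal: no induced cycle of length at least 4. -/
def Chordal {V : Type*} (G : SimpleGraph V) : Prop :=
  ∀ n, 4 ≤ n → ∀ f : Fin n → V, ¬ IsInducedCycleFun G n f

/-- `G` contains an induced copy of the pattern graph `H`. -/
def HasInducedCopy {V W : Type*} (G : SimpleGraph V) (H : SimpleGraph W) : Prop :=
  ∃ f : W → V, Function.Injective f ∧ ∀ a b : W, G.Adj (f a) (f b) ↔ H.Adj a b

/-- `Z` is (the vertex set of) a connected component of the induced subgraph `G[S]`. -/
def IsCompOf {V : Type*} (G : SimpleGraph V) (S Z : Set V) : Prop :=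
  ∃ c : (G.induce S).ConnectedComponent,
    Z = Subtype.val '' {v : S | (G.induce S).connectedComponentMk v = c}

/-- `Q` is a maximum clique of `G`. -/
def IsMaxClique {V : Type*} (G : SimpleGraph V) (Q : Set V) : Prop :=
  G.IsClique Q ∧ ∀ Q' : Set V, G.IsClique Q' → Q'.ncard ≤ Q.ncard

/-- `G` contains an induced subgraph which is the disjoint union of two
connected graphs on `m` vertices each. -/
def HasTwoConnParts {V : Type*} (G : SimpleGraph V) (m : ℕ) : Prop :=
  ∃ A B : Set V, Disjoint A B ∧ A.ncard = m ∧ B.ncard = m ∧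
    (G.induce A).Connected ∧ (G.induce B).Connected ∧
    ∀ a ∈ A, ∀ b ∈ B, ¬ G.Adj a b

/-- `2K2`: two disjoint edges. -/
def pat2K2 : SimpleGraph (Fin 4) :=
  SimpleGraph.fromRel (fun a b => (a = 0 ∧ b = 1) ∨ (a = 2 ∧ b = 3))

/-- `2P3`: two disjoint paths on three vertices. -/
def pat2P3 : SimpleGraph (Fin 6) :=
  SimpleGraph.fromRel (fun a b =>
    (a = 0 ∧ b = 1) ∨ (a = 1 ∧ b = 2) ∨ (a = 3 ∧ b = 4) ∨ (a = 4 ∧ b = 5))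

/-- `2K3`: two disjoint triangles. -/
def pat2K3 : SimpleGraph (Fin 6) :=
  SimpleGraph.fromRel (fun a b =>
    (a = 0 ∧ b = 1) ∨ (a = 1 ∧ b = 2) ∨ (a = 0 ∧ b = 2) ∨
    (a = 3 ∧ b = 4) ∨ (a = 4 ∧ b = 5) ∨ (a = 3 ∧ b = 5))

/-- `P3 + K3`: disjoint union of a path on three vertices and a triangle. -/
def patP3K3 : SimpleGraph (Fin 6) :=
  SimpleGraph.fromRel (fun a b =>
    (a = 0 ∧ b = 1) ∨ (a = 1 ∧ b = 2) ∨
    (a = 3 ∧ b = 4) ∨ (a = 4 ∧ b = 5) ∨ (a = 3 ∧ b = 5))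

/-- The butterfly: two triangles sharing exactly one vertex. -/
def patButterfly : SimpleGraph (Fin 5) :=
  SimpleGraph.fromRel (fun a b =>
    (a = 0 ∧ b = 1) ∨ (a = 1 ∧ b = 2) ∨ (a = 0 ∧ b = 2) ∨
    (a = 2 ∧ b = 3) ∨ (a = 3 ∧ b = 4) ∨ (a = 2 ∧ b = 4))

/-- The extended butterfly: two disjoint triangles joined by one edge. -/
def patExtButterfly : SimpleGraph (Fin 6) :=
  SimpleGraph.fromRel (fun a b =>
    (a = 0 ∧ b = 1) ∨ (a = 1 ∧ b = 2) ∨ (a = 0 ∧ b = 2) ∨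
    (a = 3 ∧ b = 4) ∨ (a = 4 ∧ b = 5) ∨ (a = 3 ∧ b = 5) ∨ (a = 2 ∧ b = 3))

/-- The extended co-P: a `P5` `0-1-2-3-4` plus a vertex `5` adjacent only to `0` and `1`. -/
def patExtCoP : SimpleGraph (Fin 6) :=
  SimpleGraph.fromRel (fun a b =>
    (a = 0 ∧ b = 1) ∨ (a = 1 ∧ b = 2) ∨ (a = 2 ∧ b = 3) ∨ (a = 3 ∧ b = 4) ∨
    (a = 5 ∧ b = 0) ∨ (a = 5 ∧ b = 1))

/-- The extended chair: a chair (`P4` `0-1-2-3` plus `4` adjacent only to `2`)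
plus a vertex `5` adjacent only to `0` and `1`. -/
def patExtChair : SimpleGraph (Fin 6) :=
  SimpleGraph.fromRel (fun a b =>
    (a = 0 ∧ b = 1) ∨ (a = 1 ∧ b = 2) ∨ (a = 2 ∧ b = 3) ∨ (a = 2 ∧ b = 4) ∨
    (a = 5 ∧ b = 0) ∨ (a = 5 ∧ b = 1))

/-- The double-gem: a gem (`P4` `0-1-2-3` plus `4` adjacent to all of them)
plus a vertex `5` adjacent only to `2` and `3`. -/
def patDoubleGem : SimpleGraph (Fin 6) :=
  SimpleGraph.fromRel (fun a b =>
    (a = 0 ∧ b = 1) ∨ (a = 1 ∧ b = 2) ∨ (a = 2 ∧ b = 3) ∨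
    (a = 4 ∧ b = 0) ∨ (a = 4 ∧ b = 1) ∨ (a = 4 ∧ b = 2) ∨ (a = 4 ∧ b = 3) ∨
    (a = 5 ∧ b = 2) ∨ (a = 5 ∧ b = 3))

/-- The chordless cycle on `n` vertices. -/
def patCycle (n : ℕ) : SimpleGraph (Fin n) :=
  SimpleGraph.fromRel (fun a b => (a.val + 1) % n = b.val)

/-- `G` is a split-matching-extended graph: its vertex set partitions into a
clique `Q`, an independent set `S`, and the vertex set `T` of an induced
matching, with no edges between `S` and `T`, and for every matching edge at
most one endpoint has a neighbor in `Q`. -/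
def SplitMatchingExtended {V : Type*} (G : SimpleGraph V) : Prop :=
  ∃ Q S T : Set V,
    (∀ v, v ∈ Q ∨ v ∈ S ∨ v ∈ T) ∧ Disjoint Q S ∧ Disjoint Q T ∧ Disjoint S T ∧
    G.IsClique Q ∧ (∀ a ∈ S, ∀ b ∈ S, ¬ G.Adj a b) ∧
    (∀ t ∈ T, ∃! t', t' ∈ T ∧ G.Adj t t') ∧
    (∀ s ∈ S, ∀ t ∈ T, ¬ G.Adj s t) ∧
    (∀ x ∈ T, ∀ y ∈ T, G.Adj x y →
      ¬ ((∃ q ∈ Q, G.Adj x q) ∧ (∃ q ∈ Q, G.Adj y q)))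
private lemma gE_congr' {α : Type*} (l : List α) {i j : ℕ} (h : i = j) (hi : i < l.length) :
    l[i] = l[j]'(h ▸ hi) := by subst h; rfl

private lemma chain'_gE' {α : Type*} {R : α → α → Prop} {l : List α} (h : List.Chain' R l)
    {i : ℕ} (hi : i + 1 < l.length) : R l[i] l[i+1] :=
  List.isChain_iff_getElem.mp h i (by omega)

private lemma head?_gE {α : Type*} {l : List α} {z : α} (h : l.head? = some z) :
    ∃ h0 : 0 < l.length, l[0] = z := by
  cases l with
  | nil => simp at h
  | cons a t => simp_all

private lemma getLast?_gE {α : Type*} {l : List α} {w : α} (h : l.getLast? = some w) :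
    ∃ h0 : 0 < l.length, l[l.length - 1] = w := by
  have hne : l ≠ [] := by rintro rfl; simp at h
  have h0 : 0 < l.length := List.length_pos_iff.mpr hne
  refine ⟨h0, ?_⟩
  rw [List.getLast?_eq_getElem?, List.getElem?_eq_getElem (by omega)] at h
  exact Option.some_injective _ h

private lemma gE_head? {α : Type*} {l : List α} (h0 : 0 < l.length) : l.head? = some l[0] := by
  rw [List.head?_eq_getElem?, List.getElem?_eq_getElem h0]

private lemma gE_getLast? {α : Type*} {l : List α} (h0 : 0 < l.length) :
    l.getLast? = some (l[l.length - 1]) := by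
  rw [List.getLast?_eq_getElem?, List.getElem?_eq_getElem (by omega)]


private lemma splice {V : Type*} {G : SimpleGraph V} {Q : Set V} {L : List V} {z w : V}
    (hch : L.Chain' G.Adj) (hmem : ∀ x ∈ L, x ∉ Q)
    (hhead : L.head? = some z) (hlast : L.getLast? = some w)
    (i k : ℕ) (h2 : i + 2 ≤ k) (hk : k ≤ L.length)
    (hlink : ∀ hk' : k < L.length, G.Adj (L[i]'(by omega)) L[k])
    (hend : k = L.length → (L[i]'(by omega)) = L[L.length-1]'(by omega)) :
    ∃ l' : List V, l'.length < L.length ∧ l'.Chain' G.Adj ∧ (∀ x ∈ l', x ∉ Q) ∧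
      l'.head? = some z ∧ l'.getLast? = some w := by
  have hi : i < L.length := by omega
  set T := L.take (i+1) with hT
  set D := L.drop k with hD
  have hTlen : T.length = i + 1 := by simp [hT]; omega
  have hDlen : D.length = L.length - k := by simp [hD]
  have hTgE : ∀ (a : ℕ) (ha : a < T.length), T[a] = L[a]'(by omega) := by
    intro a ha
    simp [hT, List.getElem_take]
  have hTlast : T.getLast? = some (L[i]'hi) := by
    have h0 : 0 < T.length := by omega
    rw [gE_getLast? h0, hTgE (T.length - 1) (by omega)]
    congr 1
    exact gE_congr' L (by omega) (by omega)
  refine ⟨T ++ D, ?_, ?_, ?_, ?_, ?_⟩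
  · rw [List.length_append]; omega
  · rw [List.Chain', List.isChain_append]
    refine ⟨hch.take _, hch.drop _, ?_⟩
    intro x hx y hy
    rw [hTlast] at hx
    simp only [Option.mem_def, Option.some.injEq] at hx
    subst hx
    rw [hD, List.head?_drop] at hy
    rcases Nat.lt_or_ge k L.length with hk' | hk'
    · rw [List.getElem?_eq_getElem hk'] at hy
      simp only [Option.mem_def, Option.some.injEq] at hy
      subst hy
      exact hlink hk'
    · rw [List.getElem?_eq_none (by omega)] at hy
      simp at hy
  · intro x hx
    rcases List.mem_append.mp hx with h | h
    · exact hmem x ((List.take_sublist _ _).subset h)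
    · exact hmem x ((List.drop_sublist _ _).subset h)
  · obtain ⟨h0, hz0⟩ := head?_gE hhead
    have hTne : T ≠ [] := by intro h; rw [h] at hTlen; simp at hTlen
    cases hTD : T ++ D with
    | nil => exact absurd (List.append_eq_nil_iff.mp hTD).1 hTne
    | cons a t =>
      rw [← hTD, gE_head? (by rw [hTD]; simp)]
      rw [List.getElem_append_left (by omega), hTgE 0 (by omega)]
      rw [hz0]
  · obtain ⟨h0, hw0⟩ := getLast?_gE hlast
    rw [List.getLast?_append]
    rcases Nat.lt_or_ge k L.length with hk' | hk'
    · have hDne : 0 < D.length := by omega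
      rw [gE_getLast? hDne]; rw [show ∀ (a : V) (o : Option V), (some a).or o = some a from fun _ _ => rfl]
      have : D[D.length - 1] = L[k + (D.length - 1)]'(by omega) := by
        simp [hD, List.getElem_drop]
      rw [this, gE_congr' L (show k + (D.length - 1) = L.length - 1 by omega) (by omega), hw0]
    · have hkL : k = L.length := by omega
      have hDnil : D = [] := by rw [hD, List.drop_eq_nil_iff.mpr (by omega)]
      rw [hDnil]
      simp only [List.getLast?_nil, Option.none_or]
      rw [hTlast, hend hkL, hw0]


private lemma exists_min_chain {V : Type*} {G : SimpleGraph V} {Q : Set V} {z w : V}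
    {l0 : List V} (hch0 : l0.Chain' G.Adj) (hmem0 : ∀ x ∈ l0, x ∉ Q)
    (hhead0 : l0.head? = some z) (hlast0 : l0.getLast? = some w) :
    ∃ L : List V, L.Chain' G.Adj ∧ (∀ x ∈ L, x ∉ Q) ∧ L.head? = some z ∧
      L.getLast? = some w ∧ L.length ≤ l0.length ∧ L.Nodup ∧
      ∀ i j, (hj : j < L.length) → (hij : i < j) → G.Adj (L[i]'(by omega)) (L[j]'hj) → j = i + 1 := by
  classical
  set P : ℕ → Prop := fun n => ∃ l : List V, l.length = n ∧ l.Chain' G.Adj ∧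
    (∀ x ∈ l, x ∉ Q) ∧ l.head? = some z ∧ l.getLast? = some w with hP
  have hPex : ∃ n, P n := ⟨l0.length, l0, rfl, hch0, hmem0, hhead0, hlast0⟩
  obtain ⟨L, hLlen, hch, hmem, hhead, hlast⟩ := Nat.find_spec hPex
  have hmin : ∀ l' : List V, l'.Chain' G.Adj → (∀ x ∈ l', x ∉ Q) → l'.head? = some z →
      l'.getLast? = some w → L.length ≤ l'.length := by
    intro l' h1 h2 h3 h4
    rw [hLlen]
    exact Nat.find_min' hPex ⟨l', rfl, h1, h2, h3, h4⟩
  have hLle : L.length ≤ l0.length := hmin l0 hch0 hmem0 hhead0 hlast0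
  have hind : ∀ i j, (hj : j < L.length) → (hij : i < j) → G.Adj (L[i]'(by omega)) (L[j]'hj) → j = i + 1 := by
    intro i j hj hij hadj
    by_contra hne
    have h2 : i + 2 ≤ j := by omega
    obtain ⟨l', hl1, hl2, hl3, hl4, hl5⟩ := splice hch hmem hhead hlast i j h2 (le_of_lt hj)
      (fun _ => hadj) (fun h => by omega)
    exact absurd (hmin l' hl2 hl3 hl4 hl5) (by omega)
  have nodup_aux : ∀ s t, (ht : t < L.length) → (hst : s < t) → L[s]'(by omega) ≠ L[t] := by
    intro s t ht hst heq
    obtain ⟨l', hl1, hl2, hl3, hl4, hl5⟩ := splice hch hmem hhead hlast s (t+1) (by omega)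
      (by omega)
      (fun h => by rw [gE_congr' L (rfl : s = s) (by omega), heq]; exact chain'_gE' hch h)
      (fun h => by rw [gE_congr' L (rfl : s = s) (by omega), heq]
                   exact gE_congr' L (by omega) ht)
    exact absurd (hmin l' hl2 hl3 hl4 hl5) (by omega)
  have hnd : L.Nodup := by
    rw [List.nodup_iff_injective_get]
    intro a b hab
    rcases Nat.lt_trichotomy a.val b.val with h | h | h
    · exact absurd (by simpa using hab) (nodup_aux a.val b.val b.isLt h)
    · exact Fin.ext h
    · exact absurd (by simpa using hab.symm) (nodup_aux b.val a.val a.isLt h)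
  exact ⟨L, hch, hmem, hhead, hlast, hLle, hnd, hind⟩

private lemma cycle_contra {V : Type*} {G : SimpleGraph V} (hc : Chordal G)
    {L : List V} (hnd : L.Nodup) (hch : L.Chain' G.Adj)
    (hind : ∀ i j, (hj : j < L.length) → (hij : i < j) → G.Adj (L[i]'(by omega)) (L[j]'hj) → j = i + 1)
    {y : V} (hy : y ∉ L) (hlen : 3 ≤ L.length)
    (h0 : G.Adj y (L[0]'(by omega)))
    (hl : G.Adj y (L[L.length - 1]'(by omega)))
    (hmid : ∀ i, (h : i < L.length) → 0 < i → i < L.length - 1 → ¬ G.Adj y L[i]) : False := by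
  classical
  set M : List V := L ++ [y] with hM
  have hMlen : M.length = L.length + 1 := by simp [hM]
  have hn4 : 4 ≤ M.length := by omega
  have hgetL : ∀ (i : ℕ) (h : i < L.length), M[i]'(by omega) = L[i] := by
    intro i h; simp [hM, List.getElem_append_left h]
  have hgety : ∀ (i : ℕ) (h : i = L.length), M[i]'(by omega) = y := by
    intro i h
    rw [gE_congr' M h (by omega)]
    simp [hM, List.getElem_append_right (le_refl L.length)]
  apply hc M.length hn4 (fun i => M[i.val])
  constructor
  · intro i j hij
    have hnd' : M.Nodup := by
      simp only [hM, List.nodup_append]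
      refine ⟨hnd, List.nodup_singleton y, ?_⟩
      intro a ha b hb heq
      simp only [List.mem_singleton] at hb
      subst hb heq
      exact hy ha
    have hinj := List.nodup_iff_injective_get.mp hnd'
    have : M.get ⟨i.val, i.isLt⟩ = M.get ⟨j.val, j.isLt⟩ := hij
    have := hinj this
    exact Fin.ext (congrArg Fin.val this)
  · have key : ∀ i j : Fin M.length, i.val ≤ j.val →
        (G.Adj M[i.val] M[j.val] ↔ ((i.val + 1) % M.length = j.val ∨ (j.val + 1) % M.length = i.val)) := by
      intro i j hij
      have hj := j.isLt
      rcases Nat.lt_or_ge j.val L.length with hjL | hjL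
      · -- both < L.length
        have hiL : i.val < L.length := lt_of_le_of_lt hij hjL
        rw [hgetL i.val hiL, hgetL j.val hjL]
        have e1 : (i.val + 1) % M.length = i.val + 1 := Nat.mod_eq_of_lt (by omega)
        have e2 : (j.val + 1) % M.length = j.val + 1 := Nat.mod_eq_of_lt (by omega)
        rw [e1, e2]
        constructor
        · intro hadj
          rcases Nat.lt_trichotomy i.val j.val with h | h | h
          · exact Or.inl (hind i.val j.val hjL h hadj).symm
          · rw [gE_congr' L h hiL] at hadj
            exact absurd hadj (G.irrefl)
          · omega
        · rintro (h | h)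
          · have h2 := chain'_gE' hch (show i.val + 1 < L.length by omega)
            rwa [gE_congr' L h (by omega)] at h2
          · omega
      · -- j.val = L.length
        have hjeq : j.val = L.length := by omega
        have hMj : M[j.val] = y := hgety j.val hjeq
        rcases Nat.lt_or_ge i.val L.length with hiL | hiL
        · rw [hgetL i.val hiL, hMj]
          constructor
          · intro hadj
            by_contra hcon
            push_neg at hcon
            refine hmid i.val hiL ?_ ?_ hadj.symm
            · rcases Nat.eq_zero_or_pos i.val with h | h
              · exfalso
                apply hcon.2
                rw [show (j.val + 1) % M.length = 0 by rw [hjeq, hMlen]; simp]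
                omega
              · exact h
            · rcases Nat.lt_or_ge i.val (L.length - 1) with h | h
              · exact h
              · exfalso
                apply hcon.1
                have : i.val = L.length - 1 := by omega
                rw [Nat.mod_eq_of_lt (by omega)]
                omega
          · rintro (h | h)
            · have hie : i.val = L.length - 1 := by
                rw [Nat.mod_eq_of_lt (by omega)] at h; omega
              rw [gE_congr' L hie hiL]
              exact hl.symm
            · have hie : i.val = 0 := by
                rw [show (j.val + 1) % M.length = 0 by rw [hjeq, hMlen]; simp] at h
                omega
              rw [gE_congr' L hie hiL]
              exact h0.symm
        · have hieq : i.val = L.length := by omega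
          have hMi : M[i.val] = y := hgety i.val hieq
          rw [hMi, hMj]
          simp only [SimpleGraph.irrefl, false_iff]
          rw [show (i.val + 1) % M.length = 0 by rw [hieq, hMlen]; simp,
              show (j.val + 1) % M.length = 0 by rw [hjeq, hMlen]; simp]
          omega
    intro i j
    rcases Nat.le_total i.val j.val with h | h
    · exact key i j h
    · rw [G.adj_comm, or_comm]; exact key j i h

private lemma take_getLast? {α : Type*} {L : List α} (k : ℕ) (hk : k < L.length) :
    (L.take (k+1)).getLast? = some L[k] := by
  have hlen : (L.take (k+1)).length = k + 1 := by simp; omega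
  rw [gE_getLast? (by omega)]
  congr 1
  rw [List.getElem_take]
  exact gE_congr' _ (by omega) (by omega)


private lemma key_lemma {V : Type*} {G : SimpleGraph V} (hc : Chordal G) {Q : Set V}
    (hQ : G.IsClique Q) :
    ∀ n : ℕ, ∀ l : List V, l.length ≤ n → l.Chain' G.Adj → (∀ x ∈ l, x ∉ Q) →
    ∀ z w q, l.head? = some z → l.getLast? = some w → q ∈ Q → G.Adj q w →
    ∃ z' : V, (∃ m : List V, m.Chain' G.Adj ∧ (∀ x ∈ m, x ∉ Q) ∧ m.head? = some z ∧
        m.getLast? = some z') ∧ G.Adj z' q ∧ ∀ q' ∈ Q, G.Adj z q' → G.Adj z' q' := by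
  intro n
  induction n with
  | zero =>
    intro l hlen _ _ z w q hhead _ _ _
    have : l = [] := List.length_eq_zero_iff.mp (Nat.le_zero.mp hlen)
    subst this
    simp at hhead
  | succ n ih =>
    intro l hlen hch0 hmem0 z w q hhead0 hlast0 hqQ hqw
    classical
    obtain ⟨L, hch, hmem, hhead, hlast, hLle, hnd, hind⟩ :=
      exists_min_chain hch0 hmem0 hhead0 hlast0
    obtain ⟨hpos, hz0⟩ := head?_gE hhead
    obtain ⟨hpos2, hwlast⟩ := getLast?_gE hlast
    have hzQ : z ∉ Q := hmem z (List.mem_of_mem_head? (by rw [hhead]; rfl))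
    by_cases hzq : G.Adj z q
    · exact ⟨z, ⟨[z], List.isChain_singleton z, by simpa using hzQ, rfl, rfl⟩, hzq, fun q' _ h => h⟩
    · have hPex : ∃ i, ∃ h : i < L.length, G.Adj q (L[i]) :=
        ⟨L.length - 1, by omega, by rw [hwlast]; exact hqw⟩
      set i0 := Nat.find hPex with hi0def
      obtain ⟨hi0lt, hadj0⟩ := Nat.find_spec hPex
      have hi0min : ∀ m, m < i0 → (h : m < L.length) → ¬ G.Adj q L[m] := by
        intro m hm h hadj; exact Nat.find_min hPex hm ⟨h, hadj⟩
      have hi0pos : 0 < i0 := by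
        rcases Nat.eq_zero_or_pos i0 with h | h
        · exfalso
          apply hzq
          have h2 := hadj0
          rw [gE_congr' L h hi0lt, hz0] at h2
          exact h2.symm
        · exact h
      have h1len : 1 < L.length := by omega
      -- Claim C
      have claimC : ∀ q' ∈ Q, G.Adj z q' → G.Adj (L[1]'h1len) q' := by
        intro q' hq'Q hzq'
        have hq'ne : q' ≠ q := by rintro rfl; exact hzq hzq'
        have hq'L : q' ∉ L := fun hmemL => hmem q' hmemL hq'Q
        by_cases hj : ∃ j, ∃ h : j < L.length, 1 ≤ j ∧ j ≤ i0 ∧ G.Adj q' L[j]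
        · set j0 := Nat.find hj with hj0def
          obtain ⟨hj0lt, hj01, hj0i0, hj0adj⟩ := Nat.find_spec hj
          rcases Nat.lt_or_ge j0 2 with h2 | h2
          · have h1 : j0 = 1 := by omega
            have h3 := hj0adj.symm
            rwa [gE_congr' L h1 hj0lt] at h3
          · exfalso
            set M := L.take (j0+1) with hM
            have hMlen : M.length = j0 + 1 := by simp [hM]; omega
            have hMgE : ∀ a, (ha : a < M.length) → M[a] = L[a]'(by omega) := by
              intro a ha; simp [hM, List.getElem_take]
            apply cycle_contra hc (L := M) ((List.take_sublist _ _).nodup hnd) (hch.take _)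
              ?_ (y := q') ?_ (by omega) ?_ ?_ ?_
            · intro a b hb hab hadj
              rw [hMgE a (by omega), hMgE b hb] at hadj
              exact hind a b (by omega) hab hadj
            · exact fun hmemM => hq'L ((List.take_sublist _ _).subset hmemM)
            · rw [hMgE 0 (by omega), gE_congr' L (rfl : (0:ℕ) = 0) (by omega), hz0]
              exact hzq'.symm
            · rw [hMgE (M.length - 1) (by omega)]
              have h3 := hj0adj
              rwa [gE_congr' L (show j0 = M.length - 1 by omega) hj0lt] at h3
            · intro i hi h0i hii
              rw [hMgE i hi]
              intro hadj
              exact Nat.find_min hj (show i < j0 by omega) ⟨by omega, by omega, by omega, hadj⟩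
        · push_neg at hj
          exfalso
          set M := L.take (i0+1) ++ [q] with hM
          have htake : (L.take (i0+1)).length = i0 + 1 := by simp; omega
          have hMlen : M.length = i0 + 2 := by simp [hM]; omega
          have hMgE : ∀ a, (ha : a ≤ i0) → M[a]'(by omega) = L[a]'(by omega) := by
            intro a ha
            show (L.take (i0+1) ++ [q])[a]'(by simp only [List.length_append, htake, List.length_singleton]; omega) = _
            rw [List.getElem_append_left (by omega), List.getElem_take]
          have hMq : M[i0+1]'(by omega) = q := by
            show (L.take (i0+1) ++ [q])[i0+1]'(by simp only [List.length_append, htake, List.length_singleton]; omega) = _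
            rw [List.getElem_append_right (by omega)]
            simp [htake]
          apply cycle_contra hc (L := M) ?_ ?_ ?_ (y := q') ?_ (by omega) ?_ ?_ ?_
          · rw [hM, List.nodup_append]
            refine ⟨(List.take_sublist _ _).nodup hnd, List.nodup_singleton q, ?_⟩
            intro a ha b hb heq
            simp only [List.mem_singleton] at hb
            subst hb heq
            exact hmem a ((List.take_sublist _ _).subset ha) hqQ
          · rw [hM, List.Chain', List.isChain_append]
            refine ⟨hch.take _, List.isChain_singleton q, ?_⟩
            intro x hx y hy
            rw [take_getLast? i0 hi0lt] at hx
            rw [List.head?_cons] at hy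
            simp only [Option.mem_def, Option.some.injEq] at hx hy
            subst hx; subst hy
            exact hadj0.symm
          · -- induced property of M
            intro a b hb hab hadj
            rcases Nat.lt_or_ge b (i0+1) with hb' | hb'
            · rw [hMgE a (by omega), hMgE b (by omega)] at hadj
              exact hind a b (by omega) hab hadj
            · have hbeq : b = i0 + 1 := by omega
              have ha' : a ≤ i0 := by omega
              rw [hMgE a ha', gE_congr' M hbeq (by omega), hMq] at hadj
              by_contra hne
              exact hi0min a (by omega) (by omega) hadj.symm
          · -- q' ∉ M
            intro hmemM
            rw [hM] at hmemM
            rcases List.mem_append.mp hmemM with h | h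
            · exact hq'L ((List.take_sublist _ _).subset h)
            · simp only [List.mem_singleton] at h
              exact hq'ne h
          · -- Adj q' M[0]
            rw [hMgE 0 (by omega), gE_congr' L (rfl : (0:ℕ) = 0) (by omega), hz0]
            exact hzq'.symm
          · -- Adj q' M[M.length - 1]
            rw [gE_congr' M (show M.length - 1 = i0 + 1 by omega) (by omega), hMq]
            exact hQ hq'Q hqQ hq'ne
          · -- middle
            intro i hi h0i hii
            have hii' : i ≤ i0 := by omega
            rw [hMgE i hii']
            exact hj i (by omega) (by omega) hii'
      -- recursion
      have hl2len : ((L.drop 1).take i0).length = i0 := by simp; omega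
      have hl2gE : ∀ a, (ha : a < i0) → ((L.drop 1).take i0)[a]'(by omega) = L[a+1]'(by omega) := by
        intro a ha
        rw [List.getElem_take, List.getElem_drop]
        exact gE_congr' L (by omega) (by omega)
      obtain ⟨z', ⟨m, hm1, hm2, hm3, hm4⟩, hz'q, hz'pres⟩ :=
        ih ((L.drop 1).take i0) (by omega) ((hch.drop 1).take i0)
          (fun x hx => hmem x (((List.take_sublist _ _).trans (List.drop_sublist _ _)).subset hx))
          (L[1]'h1len) (L[i0]'hi0lt) q
          (by rw [gE_head? (by omega), hl2gE 0 hi0pos])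
          (by rw [gE_getLast? (by omega), hl2gE (((L.drop 1).take i0).length - 1) (by omega)]
              congr 1
              exact gE_congr' L (by omega) (by omega))
          hqQ hadj0
      have hmne : m ≠ [] := by rintro rfl; simp at hm3
      refine ⟨z', ⟨z :: m, ?_, ?_, ?_, ?_⟩, hz'q, ?_⟩
      · rw [List.Chain', List.isChain_cons]
        refine ⟨?_, hm1⟩
        intro y hy
        rw [hm3] at hy
        simp only [Option.mem_def, Option.some.injEq] at hy
        subst hy
        have h2 := chain'_gE' hch (show 0 + 1 < L.length by omega)
        rwa [hz0] at h2
      · intro x hx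
        rcases List.mem_cons.mp hx with h | h
        · exact h ▸ hzQ
        · exact hm2 x h
      · rfl
      · cases m with
        | nil => exact absurd rfl hmne
        | cons a t => rw [List.getLast?_cons_cons]; exact hm4
      · exact fun q' hq' h => hz'pres q' hq' (claimC q' hq' h)

private lemma chain_reach {V : Type*} {G : SimpleGraph V} {Q : Set V} (m : List V) :
    m.Chain' G.Adj → (∀ x ∈ m, x ∉ Q) → ∀ a b, (ha : a ∈ (Qᶜ : Set V)) → (hb : b ∈ (Qᶜ : Set V)) →
    m.head? = some a → m.getLast? = some b →
    (G.induce (Qᶜ : Set V)).Reachable ⟨a, ha⟩ ⟨b, hb⟩ := by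
  induction m with
  | nil => intro _ _ a b _ _ h _; simp at h
  | cons x t iht =>
    intro hch hmem a b ha hb hhead hlast
    simp only [List.head?_cons, Option.some.injEq] at hhead
    subst hhead
    cases t with
    | nil =>
      simp only [List.getLast?_singleton, Option.some.injEq] at hlast
      subst hlast
      rfl
    | cons y t' =>
      have hadj : G.Adj x y := (List.isChain_cons_cons.mp hch).1
      have hyQ : y ∈ (Qᶜ : Set V) := hmem y (by simp)
      have hrec := iht (List.isChain_cons_cons.mp hch).2
        (fun u hu => hmem u (List.mem_cons_of_mem _ hu)) y b hyQ hb List.head?_cons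
        (by rw [← List.getLast?_cons_cons]; exact hlast)
      have hadj' : (G.induce (Qᶜ : Set V)).Adj ⟨x, ha⟩ ⟨y, hyQ⟩ := hadj
      exact hadj'.reachable.trans hrec


/-- Lemma 1: in a chordal graph, if every vertex of clique `Q` has a neighbor in
the component `Z` of `G[V \ Q]`, then some vertex of `Z` is universal for `Q`. -/
theorem stmt0 {V : Type*} [Fintype V] (G : SimpleGraph V) (hc : Chordal G)
    (Q Z : Set V) (hQ : G.IsClique Q) (hZ : IsCompOf G Qᶜ Z)
    (hnb : ∀ q ∈ Q, ∃ z ∈ Z, G.Adj q z) :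
    ∃ z ∈ Z, ∀ q ∈ Q, G.Adj z q := by
  classical
  obtain ⟨c, hZeq⟩ := hZ
  have hZmem : ∀ v, v ∈ Z ↔ ∃ hv : v ∈ (Qᶜ : Set V),
      (G.induce (Qᶜ : Set V)).connectedComponentMk ⟨v, hv⟩ = c := by
    intro v
    rw [hZeq]
    constructor
    · rintro ⟨u, hu, rfl⟩
      exact ⟨u.2, by simpa using hu⟩
    · rintro ⟨hv, h⟩
      exact ⟨⟨v, hv⟩, h, rfl⟩
  obtain ⟨v0, hv0⟩ := c.exists_rep
  have hZne : (Set.toFinite Z).toFinset.Nonempty :=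
    ⟨v0.val, by rw [Set.Finite.mem_toFinset]; exact (hZmem _).mpr ⟨v0.2, hv0⟩⟩
  obtain ⟨z, hzF, hmax⟩ := Finset.exists_max_image (Set.toFinite Z).toFinset
    (fun v => (Finset.univ.filter (fun q => q ∈ Q ∧ G.Adj v q)).card) hZne
  rw [Set.Finite.mem_toFinset] at hzF
  refine ⟨z, hzF, ?_⟩
  intro q hq
  by_contra hzq
  obtain ⟨w, hwZ, hqw⟩ := hnb q hq
  obtain ⟨hzc, hzmk⟩ := (hZmem z).mp hzF
  obtain ⟨hwc, hwmk⟩ := (hZmem w).mp hwZ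
  have hreach : (G.induce (Qᶜ : Set V)).Reachable ⟨z, hzc⟩ ⟨w, hwc⟩ := by
    rw [← SimpleGraph.ConnectedComponent.eq]
    rw [hzmk, hwmk]
  obtain ⟨p⟩ := hreach
  have hchain : (p.support.map Subtype.val).Chain' G.Adj :=
    (List.isChain_map _).mpr p.isChain_adj_support
  have hmeml : ∀ x ∈ p.support.map Subtype.val, x ∉ Q := by
    intro x hx
    obtain ⟨u, _, rfl⟩ := List.mem_map.mp hx
    exact u.2
  have hheadl : (p.support.map Subtype.val).head? = some z := by
    rw [p.support_eq_cons]; rfl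
  have hlastl : (p.support.map Subtype.val).getLast? = some w := by
    rw [List.getLast?_map, List.getLast?_eq_getLast p.support_ne_nil, p.getLast_support]
    rfl
  obtain ⟨z', ⟨m, hm1, hm2, hm3, hm4⟩, hz'q, hz'pres⟩ :=
    key_lemma hc hQ (p.support.map Subtype.val).length (p.support.map Subtype.val) le_rfl
      hchain hmeml z w q hheadl hlastl hq hqw
  have hz'c : z' ∈ (Qᶜ : Set V) := hm2 z' (List.mem_of_mem_getLast? (by rw [hm4]; rfl))
  have hreach2 := chain_reach m hm1 hm2 z z' hzc hz'c hm3 hm4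
  have hz'Z : z' ∈ Z := (hZmem z').mpr ⟨hz'c, by
    rw [← hzmk]
    exact (SimpleGraph.ConnectedComponent.sound hreach2).symm⟩
  have hsub : (Finset.univ.filter (fun q' => q' ∈ Q ∧ G.Adj z q')) ⊂
      (Finset.univ.filter (fun q' => q' ∈ Q ∧ G.Adj z' q')) := by
    constructor
    · intro q' hq'
      simp only [Finset.mem_filter, Finset.mem_univ, true_and] at *
      exact ⟨hq'.1, hz'pres q' hq'.1 hq'.2⟩
    · intro hsub'
      have hqmem : q ∈ Finset.univ.filter (fun q' => q' ∈ Q ∧ G.Adj z' q') := by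
        simp only [Finset.mem_filter, Finset.mem_univ, true_and]
        exact ⟨hq, hz'q⟩
      have := hsub' hqmem
      simp only [Finset.mem_filter, Finset.mem_univ, true_and] at this
      exact hzq this.2
  have hlt := Finset.card_lt_card hsub
  have hle := hmax z' (by rw [Set.Finite.mem_toFinset]; exact hz'Z)
  omega
end

section
/- Let G be a chordal graph and Q a clique with exactly two vertices q1, q2, and let Z be a connected component of G[V \ Q] such that some vertex of Z is adjacent to q1 and some vertex of Z is adjacent to q2. Then some vertex of Z is adjacent to both q1 and q2. -/
open SimpleGraph

section Helpers

open SimpleGraph Walk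

private lemma length_drop' {V : Type*} {H : SimpleGraph V} {u v : V} (p : H.Walk u v) (n : ℕ) :
    (p.drop n).length = p.length - n := by
  induction p generalizing n with
  | nil => simp [Walk.drop]
  | cons h p ih =>
    cases n with
    | zero => simp [Walk.drop]
    | succ n =>
      exact Walk.drop_length _ _

private lemma exists_walk_to_getVert {V : Type*} {H : SimpleGraph V} {u v : V}
    (p : H.Walk u v) {i : ℕ} (hi : i ≤ p.length) :
    ∃ w : H.Walk u (p.getVert i), w.length = i := by
  have h1 : p.reverse.getVert (p.length - i) = p.getVert i := by
    rw [Walk.getVert_reverse]; congr 1; omega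
  refine ⟨((p.reverse.drop (p.length - i)).copy h1 rfl).reverse, ?_⟩
  rw [Walk.length_reverse, Walk.length_copy, length_drop', Walk.length_reverse]
  omega

private lemma getVert_injOn' {V : Type*} {H : SimpleGraph V} {u v : V} {p : H.Walk u v}
    (hp : p.IsPath) :
    ∀ i, i ≤ p.length → ∀ j, j ≤ p.length → p.getVert i = p.getVert j → i = j := by
  induction p with
  | nil => intro i hi j hj _; simp only [Walk.length_nil] at hi hj; omega
  | @cons u x v h p ih =>
    rw [Walk.cons_isPath_iff] at hp
    intro i hi j hj hij
    rw [Walk.length_cons] at hi hj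
    match i, j with
    | 0, 0 => rfl
    | 0, j+1 =>
      exfalso
      apply hp.2
      rw [Walk.getVert_zero, Walk.getVert_cons_succ] at hij
      rw [hij]
      exact Walk.mem_support_iff_exists_getVert.mpr ⟨j, rfl, by omega⟩
    | i+1, 0 =>
      exfalso
      apply hp.2
      rw [Walk.getVert_zero, Walk.getVert_cons_succ] at hij
      rw [← hij]
      exact Walk.mem_support_iff_exists_getVert.mpr ⟨i, rfl, by omega⟩
    | i+1, j+1 =>
      rw [Walk.getVert_cons_succ, Walk.getVert_cons_succ] at hij
      have := ih hp.1 i (by omega) j (by omega) hij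
      omega

end Helpers

theorem stmt1 {V : Type*} [Fintype V] (G : SimpleGraph V) (hc : Chordal G)
    (q1 q2 : V) (hne : q1 ≠ q2) (hq : G.Adj q1 q2) (Z : Set V)
    (hZ : IsCompOf G ({q1, q2} : Set V)ᶜ Z)
    (h1 : ∃ x ∈ Z, G.Adj x q1) (h2 : ∃ y ∈ Z, G.Adj y q2) :
    ∃ z ∈ Z, G.Adj z q1 ∧ G.Adj z q2 := by
  classical
  by_contra hcon
  push_neg at hcon
  set S : Set V := ({q1, q2} : Set V)ᶜ with hSdef
  obtain ⟨c, hZc⟩ := hZ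
  have hmem : ∀ z : S, (G.induce S).connectedComponentMk z = c → (z : V) ∈ Z := by
    intro z hz; rw [hZc]; exact ⟨z, hz, rfl⟩
  obtain ⟨x, hxZ, hx1⟩ := h1
  obtain ⟨y, hyZ, hy2⟩ := h2
  rw [hZc] at hxZ hyZ
  obtain ⟨a0, ha0c, rfl⟩ := hxZ
  obtain ⟨b0, hb0c, rfl⟩ := hyZ
  have hreach : (G.induce S).Reachable a0 b0 :=
    (SimpleGraph.ConnectedComponent.eq).mp (ha0c.trans hb0c.symm)
  set N : ℕ → Prop := fun m => ∃ (a b : S) (p : (G.induce S).Walk a b),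
    (G.induce S).connectedComponentMk a = c ∧ G.Adj a q1 ∧ G.Adj b q2 ∧ p.length = m
    with hNdef
  have hNe : ∃ m, N m := by
    obtain ⟨p⟩ := hreach
    exact ⟨p.length, a0, b0, p, ha0c, hx1, hy2, rfl⟩
  set n₀ := Nat.find hNe with hn₀
  obtain ⟨a, b, p0, hac, ha1, hb2, hlen⟩ := Nat.find_spec hNe
  set q := p0.bypass with hqdef
  have hqpath : q.IsPath := p0.bypass_isPath
  have hql : q.length = n₀ := by
    have h1' : q.length ≤ n₀ := le_trans p0.length_bypass_le (le_of_eq hlen)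
    have h2' : n₀ ≤ q.length := Nat.find_min' hNe ⟨a, b, q, hac, ha1, hb2, rfl⟩
    omega
  set g : ℕ → S := q.getVert with hgdef
  have hg0 : g 0 = a := q.getVert_zero
  have hgn : g n₀ = b := by rw [hgdef, ← hql]; exact q.getVert_length
  have hreachg : ∀ i, i ≤ n₀ → (G.induce S).connectedComponentMk (g i) = c := by
    intro i hi
    obtain ⟨w, -⟩ := exists_walk_to_getVert q (show i ≤ q.length by rw [hql]; exact hi)
    exact (SimpleGraph.ConnectedComponent.sound w.reachable).symm.trans hac
  have hnotboth : ∀ i, i ≤ n₀ → ¬ (G.Adj (g i) q1 ∧ G.Adj (g i) q2) := by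
    intro i hi h
    exact hcon _ (hmem _ (hreachg i hi)) h.1 h.2
  have hmin : ∀ m, m < n₀ → ¬ N m := fun m hm => Nat.find_min hNe hm
  have hpos : 0 < n₀ := by
    rcases Nat.eq_zero_or_pos n₀ with h0 | h
    · exfalso
      have hab : a = b := by rw [← hg0, ← hgn, h0]
      refine hnotboth 0 (by omega) ⟨?_, ?_⟩
      · rw [hg0]; exact ha1
      · rw [hg0, hab]; exact hb2
    · exact h
  have hadjg : ∀ i, i < n₀ → G.Adj (g i) (g (i + 1)) := by
    intro i hi
    exact q.adj_getVert_succ (show i < q.length by rw [hql]; exact hi)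
  have hinj : ∀ i, i ≤ n₀ → ∀ j, j ≤ n₀ → g i = g j → i = j := by
    intro i hi j hj hg
    exact getVert_injOn' hqpath i (by rw [hql]; exact hi) j (by rw [hql]; exact hj) hg
  have hM2 : ∀ i, i < n₀ → ¬ G.Adj (g i) q2 := by
    intro i hi hadj
    obtain ⟨w, hw⟩ := exists_walk_to_getVert q (show i ≤ q.length by rw [hql]; omega)
    exact hmin i hi ⟨a, g i, w, hac, ha1, hadj, hw⟩
  have hM1 : ∀ i, 0 < i → i ≤ n₀ → ¬ G.Adj (g i) q1 := by
    intro i hipos hile hadj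
    rcases eq_or_lt_of_le hile with heq | hlt
    · refine hnotboth i hile ⟨hadj, ?_⟩
      rw [heq, hgn]; exact hb2
    · refine hmin (n₀ - i) (by omega) ⟨g i, b, q.drop i, hreachg i hile, hadj, hb2, ?_⟩
      rw [length_drop', hql]
  have hM3 : ∀ i j, i + 1 < j → j ≤ n₀ → ¬ G.Adj (g i) (g j) := by
    intro i j hij hj hadj
    obtain ⟨w1, hw1⟩ := exists_walk_to_getVert q (show i ≤ q.length by rw [hql]; omega)
    have e : (G.induce S).Adj (g i) (g j) := hadj
    refine hmin (i + 1 + (n₀ - j)) (by omega)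
      ⟨a, b, w1.append (SimpleGraph.Walk.cons e (q.drop j)), hac, ha1, hb2, ?_⟩
    rw [SimpleGraph.Walk.length_append, SimpleGraph.Walk.length_cons, length_drop', hw1, hql]
    omega
  have hgq1 : ∀ k, (g k : V) ≠ q1 := by
    intro k
    have h := (g k).2
    simp only [hSdef, Set.mem_compl_iff, Set.mem_insert_iff, Set.mem_singleton_iff, not_or] at h
    exact h.1
  have hgq2 : ∀ k, (g k : V) ≠ q2 := by
    intro k
    have h := (g k).2
    simp only [hSdef, Set.mem_compl_iff, Set.mem_insert_iff, Set.mem_singleton_iff, not_or] at h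
    exact h.2
  set f : Fin (n₀ + 3) → V := fun i =>
    if i.val = 0 then q1 else if i.val = n₀ + 2 then q2 else ↑(g (i.val - 1)) with hfdef
  have hf0 : ∀ i : Fin (n₀ + 3), i.val = 0 → f i = q1 := by
    intro i h; rw [hfdef]; dsimp only; rw [if_pos h]
  have hfn : ∀ i : Fin (n₀ + 3), i.val = n₀ + 2 → f i = q2 := by
    intro i h; rw [hfdef]; dsimp only; rw [if_neg (by omega), if_pos h]
  have hfi : ∀ i : Fin (n₀ + 3), i.val ≠ 0 → i.val ≠ n₀ + 2 → f i = ↑(g (i.val - 1)) := by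
    intro i h1 h2; rw [hfdef]; dsimp only; rw [if_neg h1, if_neg h2]
  have hmod : ∀ k : ℕ, k < n₀ + 3 → (k + 1) % (n₀ + 3) = if k = n₀ + 2 then 0 else k + 1 := by
    intro k hk
    by_cases h : k = n₀ + 2
    · subst h; rw [if_pos rfl]; simp [Nat.mod_self]
    · rw [if_neg h, Nat.mod_eq_of_lt (by omega)]
  have hRHS : ∀ i j : Fin (n₀ + 3), i.val ≤ j.val →
      (((i.val + 1) % (n₀ + 3) = j.val ∨ (j.val + 1) % (n₀ + 3) = i.val) ↔
        (j.val = i.val + 1 ∨ (i.val = 0 ∧ j.val = n₀ + 2))) := by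
    intro i j hle
    have hiv := i.isLt
    have hjv := j.isLt
    rw [hmod i.val hiv, hmod j.val hjv]
    split_ifs with h1 h2 h2 <;> omega
  have key : ∀ i j : Fin (n₀ + 3), i.val ≤ j.val →
      (G.Adj (f i) (f j) ↔ (j.val = i.val + 1 ∨ (i.val = 0 ∧ j.val = n₀ + 2))) := by
    intro i j hle
    have hiv := i.isLt
    have hjv := j.isLt
    by_cases hi0 : i.val = 0
    · by_cases hj0 : j.val = 0
      · rw [hf0 i hi0, hf0 j hj0]
        constructor
        · intro h; exact absurd h (G.irrefl)
        · intro h; exfalso; omega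
      · by_cases hjn : j.val = n₀ + 2
        · rw [hf0 i hi0, hfn j hjn]
          exact iff_of_true hq (Or.inr ⟨hi0, hjn⟩)
        · rw [hf0 i hi0, hfi j hj0 hjn]
          constructor
          · intro h
            left
            by_contra hne1
            exact hM1 (j.val - 1) (by omega) (by omega) h.symm
          · intro h
            have hj1 : j.val = 1 := by omega
            have hga : g (j.val - 1) = a := by rw [hj1]; exact hg0
            rw [hga]; exact ha1.symm
    · by_cases hin : i.val = n₀ + 2
      · have hjn : j.val = n₀ + 2 := by omega
        rw [hfn i hin, hfn j hjn]
        exact iff_of_false (G.irrefl) (by omega)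
      · have hj0 : j.val ≠ 0 := by omega
        by_cases hjn : j.val = n₀ + 2
        · rw [hfi i hi0 hin, hfn j hjn]
          constructor
          · intro h
            left
            by_contra hni
            exact hM2 (i.val - 1) (by omega) h
          · intro h
            have hi' : i.val = n₀ + 1 := by omega
            have hgb : g (i.val - 1) = b := by
              rw [hi']
              simpa using hgn
            rw [hgb]; exact hb2
        · rw [hfi i hi0 hin, hfi j hj0 hjn]
          constructor
          · intro h
            left
            by_contra hne1
            rcases eq_or_lt_of_le hle with heq | hlt
            · rw [heq] at h; exact G.irrefl h
            · exact hM3 (i.val - 1) (j.val - 1) (by omega) (by omega) h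
          · intro h
            have hj : j.val = i.val + 1 := by omega
            have hadj := hadjg (i.val - 1) (by omega)
            have hji : j.val - 1 = i.val - 1 + 1 := by omega
            rw [hji]
            exact hadj
  refine hc (n₀ + 3) (by omega) f ⟨?_, ?_⟩
  · intro i j hij
    have hiv := i.isLt
    have hjv := j.isLt
    by_cases hi0 : i.val = 0
    · by_cases hj0 : j.val = 0
      · exact Fin.ext (by omega)
      · by_cases hjn : j.val = n₀ + 2
        · rw [hf0 i hi0, hfn j hjn] at hij; exact absurd hij hne
        · rw [hf0 i hi0, hfi j hj0 hjn] at hij; exact absurd hij.symm (hgq1 _)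
    · by_cases hin : i.val = n₀ + 2
      · by_cases hj0 : j.val = 0
        · rw [hfn i hin, hf0 j hj0] at hij; exact absurd hij.symm hne
        · by_cases hjn : j.val = n₀ + 2
          · exact Fin.ext (by omega)
          · rw [hfn i hin, hfi j hj0 hjn] at hij; exact absurd hij.symm (hgq2 _)
      · by_cases hj0 : j.val = 0
        · rw [hfi i hi0 hin, hf0 j hj0] at hij; exact absurd hij (hgq1 _)
        · by_cases hjn : j.val = n₀ + 2
          · rw [hfi i hi0 hin, hfn j hjn] at hij; exact absurd hij (hgq2 _)
          · rw [hfi i hi0 hin, hfi j hj0 hjn] at hij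
            have := hinj (i.val - 1) (by omega) (j.val - 1) (by omega)
              (Subtype.coe_injective hij)
            exact Fin.ext (by omega)
  · intro i j
    rcases le_total i.val j.val with h | h
    · rw [hRHS i j h]; exact key i j h
    · rw [G.adj_comm, or_comm, hRHS j i h]; exact key j i h
end

section
/- A chordal graph G is 2K2-free if and only if G is a split graph, i.e., its vertex set can be partitioned into a clique and an independent set. -/
open SimpleGraph

lemma no_c4 {V : Type*} (G : SimpleGraph V) (hc : Chordal G) {a b c d : V}
    (hab : G.Adj a b) (hbc : G.Adj b c) (hcd : G.Adj c d) (hda : G.Adj d a)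
    (hac : ¬ G.Adj a c) (hbd : ¬ G.Adj b d) (hac' : a ≠ c) (hbd' : b ≠ d) : False := by
  have hab' := hab.ne
  have hbc' := hbc.ne
  have hcd' := hcd.ne
  have hda' := hda.ne
  have hba := hab.symm
  have hcb := hbc.symm
  have hdc := hcd.symm
  have had := hda.symm
  have hca : ¬ G.Adj c a := fun h => hac h.symm
  have hdb : ¬ G.Adj d b := fun h => hbd h.symm
  apply hc 4 (le_refl 4) ![a,b,c,d]
  constructor
  · intro i j hij
    fin_cases i <;> fin_cases j <;> simp_all
  · intro i j
    fin_cases i <;> fin_cases j <;> simp_all [SimpleGraph.irrefl]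

lemma no_c5 {V : Type*} (G : SimpleGraph V) (hc : Chordal G) {a b c d e : V}
    (hab : G.Adj a b) (hbc : G.Adj b c) (hcd : G.Adj c d) (hde : G.Adj d e)
    (hea : G.Adj e a)
    (hac : ¬ G.Adj a c) (hbd : ¬ G.Adj b d) (hce : ¬ G.Adj c e)
    (had : ¬ G.Adj a d) (hbe : ¬ G.Adj b e)
    (hac' : a ≠ c) (hbd' : b ≠ d) (hce' : c ≠ e) (had' : a ≠ d) (hbe' : b ≠ e) : False := by
  have hab' := hab.ne
  have hbc' := hbc.ne
  have hcd' := hcd.ne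
  have hde' := hde.ne
  have hea' := hea.ne
  have hba := hab.symm
  have hcb := hbc.symm
  have hdc := hcd.symm
  have hed := hde.symm
  have hae := hea.symm
  have hca : ¬ G.Adj c a := fun h => hac h.symm
  have hdb : ¬ G.Adj d b := fun h => hbd h.symm
  have hec : ¬ G.Adj e c := fun h => hce h.symm
  have hda : ¬ G.Adj d a := fun h => had h.symm
  have heb : ¬ G.Adj e b := fun h => hbe h.symm
  apply hc 5 (by norm_num) ![a,b,c,d,e]
  constructor
  · intro i j hij
    fin_cases i <;> fin_cases j <;> simp_all
  · intro i j
    fin_cases i <;> fin_cases j <;> simp_all [SimpleGraph.irrefl]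

lemma mk_2k2 {V : Type*} (G : SimpleGraph V) {a b c d : V}
    (hab : G.Adj a b) (hcd : G.Adj c d)
    (hac : ¬ G.Adj a c) (had : ¬ G.Adj a d) (hbc : ¬ G.Adj b c) (hbd : ¬ G.Adj b d)
    (hac' : a ≠ c) (had' : a ≠ d) (hbc' : b ≠ c) (hbd' : b ≠ d) :
    HasInducedCopy G pat2K2 := by
  have hab' := hab.ne
  have hcd' := hcd.ne
  have hba := hab.symm
  have hdc := hcd.symm
  have hca : ¬ G.Adj c a := fun h => hac h.symm
  have hda : ¬ G.Adj d a := fun h => had h.symm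
  have hcb : ¬ G.Adj c b := fun h => hbc h.symm
  have hdb : ¬ G.Adj d b := fun h => hbd h.symm
  refine ⟨![a,b,c,d], ?_, ?_⟩
  · intro i j hij
    fin_cases i <;> fin_cases j <;> simp_all
  · intro i j
    fin_cases i <;> fin_cases j <;> simp_all [pat2K2, SimpleGraph.irrefl]

section Count
variable {V : Type*} [DecidableEq V] (G : SimpleGraph V) [DecidableRel G.Adj]

def eCount (A : Finset V) : ℕ := ∑ u ∈ A, (A.filter (fun v => G.Adj u v)).card

lemma eCount_insert {A : Finset V} {w : V} (hw : w ∉ A) :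
    eCount G (insert w A) = eCount G A + 2 * (A.filter (fun z => G.Adj w z)).card := by
  unfold eCount
  rw [Finset.sum_insert hw]
  have h1 : (insert w A).filter (fun v => G.Adj w v) = A.filter (fun v => G.Adj w v) := by
    rw [Finset.filter_insert]; simp
  have h2 : ∀ u ∈ A, ((insert w A).filter (fun v => G.Adj u v)).card
      = (A.filter (fun v => G.Adj u v)).card + (if G.Adj u w then 1 else 0) := by
    intro u hu
    rw [Finset.filter_insert]
    split
    · rw [Finset.card_insert_of_notMem (by simp [hw]), Nat.add_comm]
    · rw [Nat.add_zero]
  rw [h1, Finset.sum_congr rfl h2, Finset.sum_add_distrib]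
  have h3 : ∑ u ∈ A, (if G.Adj u w then 1 else 0) = (A.filter (fun u => G.Adj u w)).card := by
    rw [Finset.card_filter]
  have h4 : (A.filter (fun u => G.Adj u w)).card = (A.filter (fun z => G.Adj w z)).card := by
    congr 1
    apply Finset.filter_congr
    intro u hu
    simp [G.adj_comm]
  rw [h3, h4]; ring

end Count

section Main
variable {V : Type*} [Fintype V] [DecidableEq V] {G : SimpleGraph V} [DecidableRel G.Adj]

lemma miss_nonempty {K : Finset V} (hclq : G.IsClique ↑K)
    (hmax : ∀ K' : Finset V, G.IsClique ↑K' → K'.card ≤ K.card)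
    {x : V} (hx : x ∉ K) : (K.filter (fun k => ¬ G.Adj x k)).Nonempty := by
  rw [Finset.filter_nonempty_iff]
  by_contra h
  push_neg at h
  have hcl : G.IsClique ↑(insert x K) := by
    rw [Finset.coe_insert]
    exact hclq.insert (fun b hb _ => h b (Finset.mem_coe.mp hb))
  have := hmax _ hcl
  rw [Finset.card_insert_of_notMem hx] at this
  omega

lemma common_miss (h2 : ¬ HasInducedCopy G pat2K2) {K : Finset V} (hclq : G.IsClique ↑K)
    {x y : V} (hx : x ∉ K) (hy : y ∉ K) (hxy : G.Adj x y)
    {a b : V} (ha : a ∈ K) (hb : b ∈ K)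
    (hxa : ¬ G.Adj x a) (hya : ¬ G.Adj y a) (hxb : ¬ G.Adj x b) (hyb : ¬ G.Adj y b) :
    a = b := by
  by_contra hne
  have hab : G.Adj a b := hclq (Finset.mem_coe.mpr ha) (Finset.mem_coe.mpr hb) hne
  exact h2 (mk_2k2 G hxy hab hxa hxb hya hyb
    (fun h => hx (h ▸ ha)) (fun h => hx (h ▸ hb))
    (fun h => hy (h ▸ ha)) (fun h => hy (h ▸ hb)))

lemma key_subset (hc : Chordal G) (h2 : ¬ HasInducedCopy G pat2K2)
    {K : Finset V} (hclq : G.IsClique ↑K)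
    (hmax : ∀ K' : Finset V, G.IsClique ↑K' → K'.card ≤ K.card)
    (hmin : ∀ K' : Finset V, G.IsClique ↑K' → K'.card = K.card →
      eCount G Kᶜ ≤ eCount G K'ᶜ)
    {x y : V} (hx : x ∉ K) (hy : y ∉ K) (hxy : G.Adj x y)
    (hsub : K.filter (fun k => ¬ G.Adj y k) ⊆ K.filter (fun k => ¬ G.Adj x k)) : False := by
  obtain ⟨c, hc_mem⟩ := miss_nonempty hclq hmax hy
  have hcK : c ∈ K := (Finset.mem_filter.mp hc_mem).1
  have hyc : ¬ G.Adj y c := (Finset.mem_filter.mp hc_mem).2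
  have hxc : ¬ G.Adj x c := (Finset.mem_filter.mp (hsub hc_mem)).2
  -- every common miss equals c; in particular every miss of y equals c
  have hMy : ∀ d ∈ K, ¬ G.Adj y d → d = c := by
    intro d hd hyd
    have hxd : ¬ G.Adj x d := (Finset.mem_filter.mp (hsub (Finset.mem_filter.mpr ⟨hd, hyd⟩))).2
    exact common_miss h2 hclq hx hy hxy hd hcK hxd hyd hxc hyc
  have hxc' : x ≠ c := fun h => hx (h ▸ hcK)
  have hyc' : y ≠ c := fun h => hy (h ▸ hcK)
  have hxy' : x ≠ y := hxy.ne
  -- y is adjacent to everything in K except c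
  have hyAdj : ∀ k ∈ K, k ≠ c → G.Adj y k := by
    intro k hk hkc
    by_contra h
    exact hkc (hMy k hk h)
  by_cases hMx : ∀ a ∈ K, ¬ G.Adj x a → a = c
  · -- x also misses only c : bigger clique
    have hxAdj : ∀ k ∈ K, k ≠ c → G.Adj x k := by
      intro k hk hkc
      by_contra h
      exact hkc (hMx k hk h)
    have h0 : G.IsClique ↑(K.erase c) := hclq.subset (by simp [Finset.erase_subset])
    have h1 : G.IsClique ↑(insert y (K.erase c)) := by
      rw [Finset.coe_insert]
      refine h0.insert (fun b hb _ => ?_)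
      obtain ⟨hbc, hbK⟩ := Finset.mem_erase.mp (Finset.mem_coe.mp hb)
      exact hyAdj b hbK hbc
    have h2' : G.IsClique ↑(insert x (insert y (K.erase c))) := by
      rw [Finset.coe_insert]
      refine h1.insert (fun b hb _ => ?_)
      rcases Finset.mem_insert.mp (Finset.mem_coe.mp hb) with h | h
      · exact h ▸ hxy
      · obtain ⟨hbc, hbK⟩ := Finset.mem_erase.mp h
        exact hxAdj b hbK hbc
    have hyn : y ∉ K.erase c := fun h => hy (Finset.mem_of_mem_erase h)
    have hxn : x ∉ insert y (K.erase c) := by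
      simp only [Finset.mem_insert]
      rintro (h | h)
      · exact hxy' h
      · exact hx (Finset.mem_of_mem_erase h)
    have hle := hmax _ h2'
    rw [Finset.card_insert_of_notMem hxn, Finset.card_insert_of_notMem hyn,
      Finset.card_erase_of_mem hcK] at hle
    have hpos : 0 < K.card := Finset.card_pos.mpr ⟨c, hcK⟩
    omega
  · push_neg at hMx
    obtain ⟨a, haK, hxa, hac⟩ := hMx
    have hya : G.Adj y a := hyAdj a haK hac
    -- K' = insert y (K.erase c) is a maximum clique too
    have h0 : G.IsClique ↑(K.erase c) := hclq.subset (by simp [Finset.erase_subset])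
    have h1 : G.IsClique ↑(insert y (K.erase c)) := by
      rw [Finset.coe_insert]
      refine h0.insert (fun b hb _ => ?_)
      obtain ⟨hbc, hbK⟩ := Finset.mem_erase.mp (Finset.mem_coe.mp hb)
      exact hyAdj b hbK hbc
    have hyn : y ∉ K.erase c := fun h => hy (Finset.mem_of_mem_erase h)
    have hcard : (insert y (K.erase c)).card = K.card := by
      rw [Finset.card_insert_of_notMem hyn, Finset.card_erase_of_mem hcK]
      have hpos : 0 < K.card := Finset.card_pos.mpr ⟨c, hcK⟩
      omega
    have hmin' := hmin _ h1 hcard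
    -- counting
    set I₀ : Finset V := Kᶜ.erase y with hI₀
    have hyI : y ∈ Kᶜ := Finset.mem_compl.mpr hy
    have hyI₀ : y ∉ I₀ := Finset.notMem_erase _ _
    have hcI₀ : c ∉ I₀ := by
      intro h
      exact (Finset.mem_compl.mp (Finset.mem_of_mem_erase h)) hcK
    have hKc : Kᶜ = insert y I₀ := (Finset.insert_erase hyI).symm
    have hK'c : (insert y (K.erase c))ᶜ = insert c I₀ := by
      ext v
      simp only [Finset.mem_compl, Finset.mem_insert, Finset.mem_erase, hI₀, not_or]
      constructor
      · rintro ⟨h1, h2⟩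
        by_cases hvc : v = c
        · exact Or.inl hvc
        · exact Or.inr ⟨h1, fun hvK => h2 ⟨hvc, hvK⟩⟩
      · rintro (rfl | ⟨h1, h2⟩)
        · exact ⟨fun h => hyc' h.symm, fun h => h.1 rfl⟩
        · exact ⟨h1, fun h => h2 h.2⟩
    rw [hKc, hK'c, eCount_insert G hyI₀, eCount_insert G hcI₀] at hmin'
    have hcnt : (I₀.filter (fun z => G.Adj y z)).card ≤ (I₀.filter (fun z => G.Adj c z)).card := by
      omega
    -- find z ∈ I₀ adjacent to c but not to y
    have hz : ∃ z ∈ I₀, G.Adj c z ∧ ¬ G.Adj y z := by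
      by_contra h
      push_neg at h
      have hss : I₀.filter (fun z => G.Adj c z) ⊂ I₀.filter (fun z => G.Adj y z) := by
        constructor
        · intro z hzmem
          obtain ⟨hzI, hzc⟩ := Finset.mem_filter.mp hzmem
          exact Finset.mem_filter.mpr ⟨hzI, h z hzI hzc⟩
        · intro hcon
          have hxI₀ : x ∈ I₀ := Finset.mem_erase.mpr ⟨hxy', Finset.mem_compl.mpr hx⟩
          have hxmem : x ∈ I₀.filter (fun z => G.Adj y z) :=
            Finset.mem_filter.mpr ⟨hxI₀, hxy.symm⟩
          have := Finset.mem_filter.mp (hcon hxmem)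
          exact hxc (this.2.symm)
      have := Finset.card_lt_card hss
      omega
    obtain ⟨z, hzI₀, hcz, hyz⟩ := hz
    have hzK : z ∉ K := Finset.mem_compl.mp (Finset.mem_of_mem_erase hzI₀)
    have hzy : z ≠ y := (Finset.mem_erase.mp hzI₀).1
    have hzc' : z ≠ c := hcz.ne'
    have hzx : z ≠ x := fun h => hxc (h ▸ hcz).symm
    have hxa' : x ≠ a := fun h => hx (by rw [h]; exact haK)
    have hza' : z ≠ a := fun h => hzK (by rw [h]; exact haK)
    by_cases hadj : G.Adj z x
    · by_cases hadj2 : G.Adj z a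
      · -- C4 : z - x - y - a - z
        exact no_c4 G hc hadj hxy hya hadj2.symm
          (fun h => hyz h.symm) hxa hzy hxa'
      · -- C5 : z - x - y - a - c - z
        have hacAdj : G.Adj a c := hclq (Finset.mem_coe.mpr haK) (Finset.mem_coe.mpr hcK) hac
        exact no_c5 G hc hadj hxy hya hacAdj hcz
          (fun h => hyz h.symm) hxa hyc hadj2 hxc
          hzy hxa' hyc' hza' hxc'
    · -- 2K2 on (x,y) and (z,c)
      exact h2 (mk_2k2 G hxy hcz.symm (fun h => hadj h.symm) hxc hyz hyc
        hzx.symm hxc' hzy.symm hyc')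

end Main

section Assemble
variable {V : Type*} [Fintype V] [DecidableEq V] {G : SimpleGraph V} [DecidableRel G.Adj]

lemma indep_step (hc : Chordal G) (h2 : ¬ HasInducedCopy G pat2K2)
    {K : Finset V} (hclq : G.IsClique ↑K)
    (hmax : ∀ K' : Finset V, G.IsClique ↑K' → K'.card ≤ K.card)
    (hmin : ∀ K' : Finset V, G.IsClique ↑K' → K'.card = K.card →
      eCount G Kᶜ ≤ eCount G K'ᶜ)
    {x y : V} (hx : x ∉ K) (hy : y ∉ K) (hxy : G.Adj x y) : False := by
  by_cases hA : (∃ a ∈ K, ¬ G.Adj x a ∧ G.Adj y a) ∧ (∃ b ∈ K, ¬ G.Adj y b ∧ G.Adj x b)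
  · obtain ⟨⟨a, haK, hxa, hya⟩, ⟨b, hbK, hyb, hxb⟩⟩ := hA
    have hab : a ≠ b := fun h => hyb (h ▸ hya)
    have habAdj : G.Adj a b := hclq (Finset.mem_coe.mpr haK) (Finset.mem_coe.mpr hbK) hab
    -- C4 : x - y - a - b - x
    exact no_c4 G hc hxy hya habAdj hxb.symm hxa
      (fun h => hyb h) (fun h => hx (by rw [h]; exact haK)) (fun h => hy (by rw [h]; exact hbK))
  · rw [not_and_or] at hA
    rcases hA with hA | hA
    · -- every miss of x is a miss of y : Mx ⊆ My ; apply key with roles swapped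
      push_neg at hA
      apply key_subset hc h2 hclq hmax hmin hy hx hxy.symm
      intro k hk
      rw [Finset.mem_filter] at hk ⊢
      refine ⟨hk.1, ?_⟩
      intro hyk
      exact (hA k hk.1 hk.2) hyk
    · push_neg at hA
      apply key_subset hc h2 hclq hmax hmin hx hy hxy
      intro k hk
      rw [Finset.mem_filter] at hk ⊢
      refine ⟨hk.1, ?_⟩
      intro hxk
      exact (hA k hk.1 hk.2) hxk

lemma exists_good_clique (G : SimpleGraph V) [DecidableRel G.Adj] :
    ∃ K : Finset V, G.IsClique ↑K ∧ (∀ K' : Finset V, G.IsClique ↑K' → K'.card ≤ K.card) ∧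
      (∀ K' : Finset V, G.IsClique ↑K' → K'.card = K.card →
        eCount G Kᶜ ≤ eCount G K'ᶜ) := by
  classical
  set s : Finset (Finset V) := Finset.univ.filter (fun K => G.IsClique ↑K) with hs
  have hne : s.Nonempty := ⟨∅, by simp [hs]⟩
  obtain ⟨K₀, hK₀s, hK₀max⟩ := s.exists_max_image Finset.card hne
  set t : Finset (Finset V) := s.filter (fun K => K.card = K₀.card) with ht
  have htne : t.Nonempty := ⟨K₀, by simp [ht, hK₀s]⟩
  obtain ⟨K, hKt, hKmin⟩ := t.exists_min_image (fun K => eCount G Kᶜ) htne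
  rw [ht, Finset.mem_filter] at hKt
  obtain ⟨hKs, hKcard⟩ := hKt
  rw [hs, Finset.mem_filter] at hKs
  refine ⟨K, hKs.2, ?_, ?_⟩
  · intro K' hK'
    calc K'.card ≤ K₀.card := hK₀max K' (by simp [hs, hK'])
    _ = K.card := hKcard.symm
  · intro K' hK' hcard
    exact hKmin K' (by simp [ht, hs, hK', hcard, hKcard])

end Assemble

/-- A chordal graph is `2K2`-free iff it is a split graph. -/
theorem stmt2 {V : Type*} [Fintype V] (G : SimpleGraph V) (hc : Chordal G) :
    ¬ HasInducedCopy G pat2K2 ↔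
      ∃ Q S : Set V, (∀ v, v ∈ Q ∨ v ∈ S) ∧ Disjoint Q S ∧
        G.IsClique Q ∧ (∀ a ∈ S, ∀ b ∈ S, ¬ G.Adj a b) := by
  classical
  constructor
  · intro h2
    obtain ⟨K, hclq, hmax, hmin⟩ := exists_good_clique G
    refine ⟨↑K, ↑(Kᶜ), fun v => ?_, ?_, hclq, ?_⟩
    · simp only [Finset.coe_compl, Set.mem_compl_iff, Finset.mem_coe]
      exact em _
    · rw [Finset.coe_compl]
      exact disjoint_compl_right
    · intro a ha b hb hadj
      simp only [Finset.coe_compl, Set.mem_compl_iff, Finset.mem_coe] at ha hb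
      exact indep_step hc h2 hclq hmax hmin ha hb hadj
  · rintro ⟨Q, S, hcov, hdisj, hclq, hind⟩ ⟨f, hinj, hadj⟩
    have e01 : G.Adj (f 0) (f 1) := (hadj 0 1).mpr (by simp [pat2K2])
    have e23 : G.Adj (f 2) (f 3) := (hadj 2 3).mpr (by simp [pat2K2])
    have cross : ∀ i j : Fin 4, (i = 0 ∨ i = 1) → (j = 2 ∨ j = 3) → ¬ G.Adj (f i) (f j) := by
      intro i j hi hj h
      have := (hadj i j).mp h
      rcases hi with rfl | rfl <;> rcases hj with rfl | rfl <;>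
        simp_all [pat2K2]
    have hq1 : ∃ i : Fin 4, (i = 0 ∨ i = 1) ∧ f i ∈ Q := by
      rcases hcov (f 0) with h | h
      · exact ⟨0, Or.inl rfl, h⟩
      · rcases hcov (f 1) with h' | h'
        · exact ⟨1, Or.inr rfl, h'⟩
        · exact absurd e01 (hind _ h _ h')
    have hq2 : ∃ j : Fin 4, (j = 2 ∨ j = 3) ∧ f j ∈ Q := by
      rcases hcov (f 2) with h | h
      · exact ⟨2, Or.inl rfl, h⟩
      · rcases hcov (f 3) with h' | h'
        · exact ⟨3, Or.inr rfl, h'⟩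
        · exact absurd e23 (hind _ h _ h')
    obtain ⟨i, hi, hiQ⟩ := hq1
    obtain ⟨j, hj, hjQ⟩ := hq2
    have hne : f i ≠ f j := by
      intro h
      have := hinj h
      rcases hi with rfl | rfl <;> rcases hj with rfl | rfl <;> simp_all
    exact cross i j hi hj (hclq hiQ hjQ hne)
end

section
/- A chordal graph G is (2P3, 2K3, P3+K3)-free if and only if there exists a clique Q in G such that every connected component of G[V \ Q] has at most 2 vertices. -/
open SimpleGraph

open List

namespace Aux

variable {V : Type*} (G : SimpleGraph V)

/-- A walk within `S` from `x` to `y`, as a list of vertices. -/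
def WalkB (S : Set V) (x y : V) (l : List V) : Prop :=
  l.IsChain G.Adj ∧ (∀ v ∈ l, v ∈ S) ∧ l.head? = some x ∧ l.getLast? = some y

/-- Connectivity within the set `S`. -/
def ConnIn (S : Set V) (x y : V) : Prop := ∃ l, WalkB G S x y l

variable {G}

lemma WalkB.ne_nil {S x y l} (h : WalkB G S x y l) : l ≠ [] := by
  rintro rfl; simp [WalkB] at h

lemma WalkB.mem_left {S x y l} (h : WalkB G S x y l) : x ∈ S := by
  obtain ⟨-, hS, hh, -⟩ := h
  exact hS x (List.mem_of_mem_head? hh)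

lemma WalkB.mem_right {S x y l} (h : WalkB G S x y l) : y ∈ S := by
  obtain ⟨-, hS, -, hl⟩ := h
  exact hS y (List.mem_of_mem_getLast? hl)

lemma ConnIn.mem_left {S x y} (h : ConnIn G S x y) : x ∈ S := by
  obtain ⟨l, hl⟩ := h; exact hl.mem_left

lemma ConnIn.mem_right {S x y} (h : ConnIn G S x y) : y ∈ S := by
  obtain ⟨l, hl⟩ := h; exact hl.mem_right

lemma ConnIn.refl {S x} (hx : x ∈ S) : ConnIn G S x x :=
  ⟨[x], by simp [WalkB], by simpa using hx, by simp, by simp⟩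

lemma ConnIn.symm {S x y} (h : ConnIn G S x y) : ConnIn G S y x := by
  obtain ⟨l, h1, h2, h3, h4⟩ := h
  refine ⟨l.reverse, ?_, by simpa using h2, by simpa using h4, by simpa using h3⟩
  rw [List.isChain_reverse]
  exact h1.imp fun a b hab => hab.symm

lemma ConnIn.trans {S x y z} (h : ConnIn G S x y) (h' : ConnIn G S y z) :
    ConnIn G S x z := by
  obtain ⟨l, h1, h2, h3, h4⟩ := h
  obtain ⟨m, g1, g2, g3, g4⟩ := h'
  match m, g3 with
  | [_], g3 =>
      simp at g3 g4
      exact ⟨l, h1, h2, h3, by rw [h4, g3.symm.trans g4]⟩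
  | (_ :: b :: t), g3 =>
      simp at g3
      subst g3
      refine ⟨l ++ b :: t, ?_, ?_, ?_, ?_⟩
      · rw [List.isChain_append]
        refine ⟨h1, g1.tail, ?_⟩
        intro p hp q hq
        rw [h4] at hp; simp at hp hq
        subst hp; subst hq
        exact g1.rel_head
      · intro v hv
        rcases List.mem_append.1 hv with hv | hv
        · exact h2 v hv
        · exact g2 v (List.mem_cons_of_mem _ hv)
      · rcases l with - | ⟨a, t'⟩
        · simp at h3
        · simpa using h3
      · rw [List.getLast?_append] <;> simp_all

lemma ConnIn.of_adj {S x y} (hx : x ∈ S) (hy : y ∈ S) (h : G.Adj x y) :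
    ConnIn G S x y :=
  ⟨[x, y], by simp [WalkB, h], by rintro v hv; simp at hv; rcases hv with rfl | rfl <;>
    assumption, by simp, by simp⟩

lemma ConnIn.mono {S S' : Set V} (hss : S ⊆ S') {x y} (h : ConnIn G S x y) :
    ConnIn G S' x y := by
  obtain ⟨l, h1, h2, h3, h4⟩ := h
  exact ⟨l, h1, fun v hv => hss (h2 v hv), h3, h4⟩


/-- consecutive adjacency from a chain'. -/
lemma chain'_adj {l : List V} (h : l.IsChain G.Adj) {i : ℕ} (hi : i + 1 < l.length) :
    G.Adj l[i] l[i + 1] := by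
  have := List.isChain_iff_getElem.1 h i (by omega)
  simpa [List.get_eq_getElem] using this

lemma getElem_idx_eq (l : List V) {i j : ℕ} (h : i = j) (hi : i < l.length) :
    l[i] = l[j]'(h ▸ hi) := by subst h; rfl

lemma walkB_head_eq {S x y} {l : List V} (h : WalkB G S x y l) (h0 : 0 < l.length) :
    l[0] = x := by
  obtain ⟨-, -, h3, -⟩ := h
  rw [List.head?_eq_getElem?, List.getElem?_eq_getElem h0] at h3
  exact Option.some_injective _ h3

lemma walkB_last_eq {S x y} {l : List V} (h : WalkB G S x y l) (h0 : 0 < l.length) :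
    l[l.length - 1]'(by omega) = y := by
  obtain ⟨-, -, -, h4⟩ := h
  rw [List.getLast?_eq_getElem?, List.getElem?_eq_getElem (by omega)] at h4
  exact Option.some_injective _ h4

lemma walkB_pos {S x y} {l : List V} (h : WalkB G S x y l) : 0 < l.length :=
  List.length_pos_iff.2 h.ne_nil

lemma getLast?_take_eq {l : List V} {i : ℕ} (hi : i < l.length) :
    (l.take (i+1)).getLast? = some l[i] := by
  rw [List.getLast?_take, if_neg (Nat.succ_ne_zero i)]
  simp only [Nat.add_sub_cancel]
  rw [List.getElem?_eq_getElem hi]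
  rfl

lemma head?_take_eq {l : List V} {n : ℕ} (hn : 0 < n) :
    (l.take n).head? = l.head? := by
  rw [List.head?_eq_getElem?, List.head?_eq_getElem?, List.getElem?_take, if_pos hn]

/-- Splicing a walk along a shortcut: if `l[i]` and `l[j]` are adjacent or equal
(with `i < j`), a shorter walk exists. -/
lemma splice {S x y} {l : List V} (h : WalkB G S x y l) {i j : ℕ}
    (hi : i < l.length) (hj : j < l.length) (hij : i + 2 ≤ j)
    (hadj : G.Adj (l[i]) (l[j]) ∨ l[i] = l[j]) :
    ∃ l', WalkB G S x y l' ∧ l'.length < l.length := by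
  obtain ⟨h1, h2, h3, h4⟩ := h
  rcases hadj with hadj | heq
  · refine ⟨l.take (i+1) ++ l.drop j, ⟨?_, ?_, ?_, ?_⟩, ?_⟩
    · rw [List.isChain_append]
      refine ⟨h1.take _, h1.drop _, ?_⟩
      intro p hp q hq
      rw [getLast?_take_eq hi] at hp
      rw [List.head?_drop, List.getElem?_eq_getElem hj] at hq
      simp only [Option.mem_def, Option.some.injEq] at hp hq
      subst hp; subst hq; exact hadj
    · intro v hv
      rcases List.mem_append.1 hv with hv | hv
      · exact h2 v (List.mem_of_mem_take hv)
      · exact h2 v (List.mem_of_mem_drop hv)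
    · rw [List.head?_append_of_ne_nil, head?_take_eq (Nat.succ_pos i)]
      · exact h3
      · exact List.ne_nil_of_length_pos (by rw [List.length_take]; omega)
    · rw [List.getLast?_append, List.getLast?_drop, if_neg (by omega)]
      simp [h4]
    · simp only [List.length_append, List.length_take, List.length_drop]
      omega
  · refine ⟨l.take (i+1) ++ l.drop (j+1), ⟨?_, ?_, ?_, ?_⟩, ?_⟩
    · rw [List.isChain_append]
      refine ⟨h1.take _, h1.drop _, ?_⟩
      intro p hp q hq
      rw [getLast?_take_eq hi] at hp
      rw [List.head?_drop] at hq
      simp only [Option.mem_def, Option.some.injEq] at hp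
      subst hp
      have hj1 : j + 1 < l.length := by
        by_contra hc
        rw [List.getElem?_eq_none (by omega)] at hq
        simp at hq
      rw [List.getElem?_eq_getElem hj1] at hq
      simp only [Option.mem_def, Option.some.injEq] at hq
      subst hq
      rw [heq]
      exact chain'_adj h1 hj1
    · intro v hv
      rcases List.mem_append.1 hv with hv | hv
      · exact h2 v (List.mem_of_mem_take hv)
      · exact h2 v (List.mem_of_mem_drop hv)
    · rw [List.head?_append_of_ne_nil, head?_take_eq (Nat.succ_pos i)]
      · exact h3
      · exact List.ne_nil_of_length_pos (by rw [List.length_take]; omega)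
    · rw [List.getLast?_append, List.getLast?_drop]
      by_cases hc : l.length ≤ j + 1
      · rw [if_pos hc, Option.none_or, getLast?_take_eq hi, heq]
        rw [List.getLast?_eq_getElem?, List.getElem?_eq_getElem (by omega : l.length - 1 < l.length)] at h4
        rw [getElem_idx_eq l (show j = l.length - 1 by omega) hj]
        exact h4
      · rw [if_neg hc]; simp [h4]
    · simp only [List.length_append, List.length_take, List.length_drop]
      omega

/-- An induced (chordless) path within `S`. -/
def IPath (G : SimpleGraph V) (S : Set V) (x y : V) (l : List V) : Prop :=
  WalkB G S x y l ∧ l.Nodup ∧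
    ∀ i j : ℕ, ∀ hi : i < l.length, ∀ hj : j < l.length, i + 2 ≤ j → ¬ G.Adj l[i] l[j]

lemma exists_ipath {S x y} (h : ConnIn G S x y) : ∃ l, IPath G S x y l := by
  classical
  obtain ⟨l0, hl0⟩ := h
  suffices H : ∀ n (l : List V), l.length ≤ n → WalkB G S x y l → ∃ m, IPath G S x y m from
    H l0.length l0 le_rfl hl0
  intro n
  induction n with
  | zero => intro l hl hw; have := walkB_pos hw; omega
  | succ n ih =>
    intro l hl hw
    by_cases hbad : ∃ i j : ℕ, ∃ hi : i < l.length, ∃ hj : j < l.length, i + 2 ≤ j ∧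
        (G.Adj (l[i]) (l[j]) ∨ l[i] = l[j])
    · obtain ⟨i, j, hi, hj, hij, hc⟩ := hbad
      obtain ⟨l', hw', hlt⟩ := splice hw hi hj hij hc
      exact ih l' (by omega) hw'
    · refine ⟨l, hw, ?_, ?_⟩
      · rw [List.nodup_iff_injective_get]
        intro a b hab
        simp only [List.get_eq_getElem] at hab
        by_contra hne
        have hne' : (a : ℕ) ≠ (b : ℕ) := fun h' => hne (Fin.ext h')
        rcases lt_or_gt_of_ne hne' with hlt | hlt
        · rcases Nat.lt_or_ge ((a:ℕ) + 1) b with h2 | h2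
          · exact hbad ⟨a, b, a.isLt, b.isLt, by omega, Or.inr hab⟩
          · have hb : (b:ℕ) = (a:ℕ) + 1 := by omega
            have hadj := chain'_adj hw.1 (show (a:ℕ) + 1 < l.length by omega)
            rw [← getElem_idx_eq l hb b.isLt, ← hab] at hadj
            exact G.irrefl hadj
        · rcases Nat.lt_or_ge ((b:ℕ) + 1) a with h2 | h2
          · exact hbad ⟨b, a, b.isLt, a.isLt, by omega, Or.inr hab.symm⟩
          · have ha : (a:ℕ) = (b:ℕ) + 1 := by omega
            have hadj := chain'_adj hw.1 (show (b:ℕ) + 1 < l.length by omega)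
            rw [← getElem_idx_eq l ha a.isLt, hab] at hadj
            exact G.irrefl hadj
      · intro i j hi hj hij hadj
        exact hbad ⟨i, j, hi, hj, hij, Or.inl hadj⟩

lemma IPath.adj_iff {S x y} {l : List V} (h : IPath G S x y l) {i j : ℕ}
    (hi : i < l.length) (hj : j < l.length) :
    G.Adj l[i] l[j] ↔ (i + 1 = j ∨ j + 1 = i) := by
  obtain ⟨hw, hnd, hind⟩ := h
  constructor
  · intro hadj
    by_contra hc
    push_neg at hc
    rcases lt_trichotomy i j with hlt | rfl | hlt
    · exact hind i j hi hj (by omega) hadj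
    · exact G.irrefl hadj
    · exact hind j i hj hi (by omega) hadj.symm
  · rintro (rfl | rfl)
    · exact chain'_adj hw.1 hj
    · exact (chain'_adj hw.1 hi).symm

lemma IPath.nodup_get {S x y} {l : List V} (h : IPath G S x y l) {i j : ℕ}
    (hi : i < l.length) (hj : j < l.length) (hij : i ≠ j) : l[i] ≠ l[j] := by
  intro he
  have h2 := List.nodup_iff_injective_get.1 h.2.1
    (a₁ := ⟨i, hi⟩) (a₂ := ⟨j, hj⟩) (by simpa using he)
  exact hij (by simpa using congrArg Fin.val h2)


section TwoPaths

variable {S₁ S₂ : Set V} {x y : V} {l₁ l₂ : List V}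

/-- Two internally-disjoint induced paths with the same endpoints, no cross edges,
and both of length at least 2 edges, contradict chordality. -/
lemma no_two_ipaths (hc : Chordal G)
    (h1 : IPath G S₁ x y l₁) (h2 : IPath G S₂ x y l₂)
    (hl1 : 3 ≤ l₁.length) (hl2 : 3 ≤ l₂.length)
    (hcross : ∀ i j : ℕ, ∀ hi : i < l₁.length, ∀ hj : j < l₂.length,
       0 < i → i < l₁.length - 1 → 0 < j → j < l₂.length - 1 →
       l₁[i] ≠ l₂[j] ∧ ¬ G.Adj l₁[i] l₂[j]) : False := by
  set p1 := l₁.length with hp1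
  set p2 := l₂.length with hp2
  set n := p1 + p2 - 2 with hn
  have hn4 : 4 ≤ n := by omega
  have hb : ∀ i : Fin n, ¬ ((i : ℕ) < p1) → p1 + p2 - 2 - (i : ℕ) < p2 := by
    intro i hi; have := i.isLt; omega
  set f : Fin n → V := fun i =>
    if h : (i : ℕ) < p1 then l₁[(i : ℕ)] else l₂[p1 + p2 - 2 - (i : ℕ)]'(hb i h) with hf
  have hx1 : l₁[0]'(by omega) = x := walkB_head_eq h1.1 (by omega)
  have hx2 : l₂[0]'(by omega) = x := walkB_head_eq h2.1 (by omega)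
  have hy1 : l₁[p1 - 1]'(by omega) = y := walkB_last_eq h1.1 (by omega)
  have hy2 : l₂[p2 - 1]'(by omega) = y := walkB_last_eq h2.1 (by omega)
  -- the key adjacency characterization
  have key : ∀ i j : Fin n, (i : ℕ) < (j : ℕ) →
      (G.Adj (f i) (f j) ↔ ((j : ℕ) = (i : ℕ) + 1 ∨ ((i : ℕ) = 0 ∧ (j : ℕ) = n - 1))) := by
    intro i j hij
    have hiLt := i.isLt
    have hjLt := j.isLt
    by_cases hjp : (j : ℕ) < p1
    · have hip : (i : ℕ) < p1 := by omega
      simp only [hf, dif_pos hip, dif_pos hjp]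
      rw [h1.adj_iff hip hjp]
      constructor
      · rintro (h | h)
        · exact Or.inl h.symm
        · omega
      · rintro (h | ⟨h0, hn1⟩)
        · exact Or.inl h.symm
        · omega
    · by_cases hip : (i : ℕ) < p1
      · -- mixed case
        simp only [hf, dif_pos hip, dif_neg hjp]
        set k := p1 + p2 - 2 - (j : ℕ) with hk
        have hk1 : 1 ≤ k := by omega
        have hk2 : k ≤ p2 - 2 := by omega
        rcases Nat.eq_zero_or_pos (i : ℕ) with hi0 | hi0
        · -- i = 0 : f i = x = l₂[0]
          have : l₁[(i:ℕ)]'hip = l₂[0]'(by omega) := by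
            rw [getElem_idx_eq l₁ hi0 hip, hx1, hx2]
          rw [this, h2.adj_iff (by omega) (hb j hjp)]
          constructor
          · rintro (h | h)
            · right; constructor; omega
              omega
            · omega
          · rintro (h | ⟨h0, hn1⟩)
            · omega
            · left; omega
        · rcases Nat.lt_or_ge (i : ℕ) (p1 - 1) with hi1 | hi1
          · -- internal of l₁ vs internal of l₂
            have hcr := hcross (i : ℕ) k hip (by omega) hi0 hi1 (by omega) (by omega)
            constructor
            · intro h; exact absurd h hcr.2
            · rintro (h | ⟨h0, hn1⟩) <;> omega
          · -- i = p1 - 1 : f i = y = l₂[p2-1]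
            have hieq : (i : ℕ) = p1 - 1 := by omega
            have : l₁[(i:ℕ)]'hip = l₂[p2 - 1]'(by omega) := by
              rw [getElem_idx_eq l₁ hieq hip, hy1, hy2]
            rw [this, h2.adj_iff (by omega) (hb j hjp)]
            constructor
            · rintro (h | h)
              · omega
              · left; omega
            · rintro (h | ⟨h0, hn1⟩)
              · right; omega
              · omega
      · -- both in l₂ part
        simp only [hf, dif_neg hip, dif_neg hjp]
        rw [h2.adj_iff (hb i hip) (hb j hjp)]
        constructor
        · rintro (h | h)
          · left; omega
          · omega
        · rintro (h | ⟨h0, hn1⟩)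
          · right; omega
          · omega
  -- injectivity (for i < j)
  have inj2 : ∀ i j : Fin n, (i : ℕ) < (j : ℕ) → f i ≠ f j := by
    intro i j hij
    have hiLt := i.isLt
    have hjLt := j.isLt
    by_cases hjp : (j : ℕ) < p1
    · have hip : (i : ℕ) < p1 := by omega
      simp only [hf, dif_pos hip, dif_pos hjp]
      exact h1.nodup_get hip hjp (by omega)
    · by_cases hip : (i : ℕ) < p1
      · simp only [hf, dif_pos hip, dif_neg hjp]
        set k := p1 + p2 - 2 - (j : ℕ) with hk
        have hk1 : 1 ≤ k := by omega
        have hk2 : k ≤ p2 - 2 := by omega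
        rcases Nat.eq_zero_or_pos (i : ℕ) with hi0 | hi0
        · have : l₁[(i:ℕ)]'hip = l₂[0]'(by omega) := by
            rw [getElem_idx_eq l₁ hi0 hip, hx1, hx2]
          rw [this]
          exact h2.nodup_get (by omega) (hb j hjp) (by omega)
        · rcases Nat.lt_or_ge (i : ℕ) (p1 - 1) with hi1 | hi1
          · exact (hcross (i : ℕ) k hip (by omega) hi0 hi1 (by omega) (by omega)).1
          · have hieq : (i : ℕ) = p1 - 1 := by omega
            have : l₁[(i:ℕ)]'hip = l₂[p2 - 1]'(by omega) := by
              rw [getElem_idx_eq l₁ hieq hip, hy1, hy2]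
            rw [this]
            exact h2.nodup_get (by omega) (hb j hjp) (by omega)
      · simp only [hf, dif_neg hip, dif_neg hjp]
        exact h2.nodup_get (hb i hip) (hb j hjp) (by omega)
  refine hc n hn4 f ⟨?_, ?_⟩
  · intro i j hij
    by_contra hne
    rcases lt_trichotomy ((i : ℕ)) ((j : ℕ)) with h | h | h
    · exact inj2 i j h hij
    · exact hne (Fin.ext h)
    · exact inj2 j i h hij.symm
  · intro i j
    have hiLt := i.isLt
    have hjLt := j.isLt
    rcases lt_trichotomy ((i : ℕ)) ((j : ℕ)) with h | h | h
    · rw [key i j h]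
      constructor
      · rintro (h' | ⟨h0, hn1⟩)
        · left; rw [← h', Nat.mod_eq_of_lt (by omega)]
        · right; rw [hn1, h0]
          rw [Nat.sub_add_cancel (by omega), Nat.mod_self]
      · rintro (h' | h')
        · rcases Nat.lt_or_ge ((i : ℕ) + 1) n with hlt | hge
          · rw [Nat.mod_eq_of_lt hlt] at h'; omega
          · have : (i : ℕ) + 1 = n := by omega
            rw [this, Nat.mod_self] at h'; omega
        · rcases Nat.lt_or_ge ((j : ℕ) + 1) n with hlt | hge
          · rw [Nat.mod_eq_of_lt hlt] at h'; omega
          · have : (j : ℕ) + 1 = n := by omega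
            rw [this, Nat.mod_self] at h'; omega
    · constructor
      · intro hadj
        exact absurd (Fin.ext h : i = j) (by rintro rfl; exact G.irrefl hadj)
      · rintro (h' | h')
        · exfalso
          rcases Nat.lt_or_ge ((i : ℕ) + 1) n with hlt | hge
          · rw [Nat.mod_eq_of_lt hlt] at h'; omega
          · have : (i : ℕ) + 1 = n := by omega
            rw [this, Nat.mod_self] at h'; omega
        · exfalso
          rcases Nat.lt_or_ge ((j : ℕ) + 1) n with hlt | hge
          · rw [Nat.mod_eq_of_lt hlt] at h'; omega
          · have : (j : ℕ) + 1 = n := by omega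
            rw [this, Nat.mod_self] at h'; omega
    · have := key j i h
      constructor
      · intro hadj
        rcases (this.1 hadj.symm) with h' | ⟨h0, hn1⟩
        · right; rw [← h', Nat.mod_eq_of_lt (by omega)]
        · left; rw [hn1, h0, Nat.sub_add_cancel (by omega), Nat.mod_self]
      · intro h'
        have h'' : ((i : ℕ)) = (j : ℕ) + 1 ∨ ((j : ℕ) = 0 ∧ (i : ℕ) = n - 1) := by
          rcases h' with h' | h'
          · rcases Nat.lt_or_ge ((i : ℕ) + 1) n with hlt | hge
            · rw [Nat.mod_eq_of_lt hlt] at h'; omega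
            · rw [(by omega : (i : ℕ) + 1 = n), Nat.mod_self] at h'
              right; omega
          · rcases Nat.lt_or_ge ((j : ℕ) + 1) n with hlt | hge
            · rw [Nat.mod_eq_of_lt hlt] at h'; omega
            · rw [(by omega : (j : ℕ) + 1 = n), Nat.mod_self] at h'; omega
        exact (this.2 h'').symm

end TwoPaths

lemma walk_conn_all {S : Set V} {y : V} :
    ∀ (l : List V) (x : V), WalkB G S x y l → ∀ v ∈ l, ConnIn G S x v := by
  intro l
  induction l with
  | nil => intro x hw v hv; exact absurd rfl hw.ne_nil
  | cons h t ih =>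
    intro x hw v hv
    have hx : h = x := by
      have h3 := hw.2.2.1; simpa using h3
    subst hx
    rcases List.mem_cons.1 hv with rfl | hv
    · exact ConnIn.refl hw.mem_left
    · match t, hv with
      | c :: t', hv =>
        have hw' : WalkB G S c y (c :: t') := by
          refine ⟨hw.1.tail, fun u hu => hw.2.1 u (List.mem_cons_of_mem _ hu), rfl, ?_⟩
          rw [← hw.2.2.2, List.getLast?_cons_cons]
        have hxc : ConnIn G S h c :=
          ConnIn.of_adj (hw.2.1 h List.mem_cons_self)
            (hw.2.1 c (by simp)) hw.1.rel_head
        exact hxc.trans (ih c hw' v hv)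

lemma walk_exit {S₀ : Set V} {s y : V} :
    ∀ (l : List V) (x : V), WalkB G (S₀ ∪ {s}) x y l → x ≠ s → s ∈ l →
      ∃ u, u ∈ S₀ ∧ G.Adj u s ∧ ConnIn G S₀ x u := by
  intro l
  induction l with
  | nil => intro x hw _ _; exact absurd rfl hw.ne_nil
  | cons h t ih =>
    intro x hw hxs hsl
    have hx : h = x := by
      have h3 := hw.2.2.1; simpa using h3
    subst hx
    have hxS : h ∈ S₀ := by
      rcases hw.2.1 h List.mem_cons_self with h' | h'
      · exact h'
      · exact absurd h' hxs
    have hst : s ∈ t := by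
      rcases List.mem_cons.1 hsl with rfl | h'
      · exact absurd rfl hxs
      · exact h'
    match t, hst with
    | c :: t', hst =>
      have hadj : G.Adj h c := hw.1.rel_head
      by_cases hcs : c = s
      · exact ⟨h, hxS, hcs ▸ hadj, ConnIn.refl hxS⟩
      · have hw' : WalkB G (S₀ ∪ {s}) c y (c :: t') := by
          refine ⟨hw.1.tail, fun u hu => hw.2.1 u (List.mem_cons_of_mem _ hu), rfl, ?_⟩
          rw [← hw.2.2.2, List.getLast?_cons_cons]
        obtain ⟨u, hu1, hu2, hu3⟩ := ih c hw' hcs hst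
        have hcS : c ∈ S₀ := by
          rcases hw.2.1 c (by simp) with h' | h'
          · exact h'
          · exact absurd h' hcs
        exact ⟨u, hu1, hu2, (ConnIn.of_adj hxS hcS hadj).trans hu3⟩

lemma not_conn_pair {a b : V} (hne : a ≠ b) (hnadj : ¬ G.Adj a b) :
    ¬ ConnIn G {a, b} a b := by
  rintro ⟨l, hw⟩
  match l, hw.ne_nil with
  | x :: t, _ =>
    have hx : x = a := by have h3 := hw.2.2.1; simpa using h3
    match t with
    | [] =>
      have h4 := hw.2.2.2; simp at h4; exact hne (hx.symm.trans h4)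
    | c :: t' =>
      have hadj : G.Adj a c := by
        have h' : G.Adj x c := hw.1.rel_head
        rwa [hx] at h'
      have hc : c ∈ ({a, b} : Set V) := hw.2.1 c (by simp)
      simp only [Set.mem_insert_iff, Set.mem_singleton_iff] at hc
      rcases hc with h' | h'
      · rw [h'] at hadj; exact G.irrefl hadj
      · rw [h'] at hadj; exact hnadj hadj

lemma ConnIn.to_component {S₀ : Set V} {x u : V} (h : ConnIn G S₀ x u) :
    ConnIn G {w | ConnIn G S₀ x w} x u := by
  obtain ⟨l, hw⟩ := h
  exact ⟨l, hw.1, fun v hv => walk_conn_all l x hw v hv, hw.2.2.1, hw.2.2.2⟩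

lemma IPath.three_le {S : Set V} {x y : V} {l : List V} (h : IPath G S x y l)
    (hne : x ≠ y) (hnadj : ¬ G.Adj x y) : 3 ≤ l.length := by
  have h0 := walkB_pos h.1
  have hx := walkB_head_eq h.1 h0
  have hy := walkB_last_eq h.1 h0
  rcases (by omega : l.length = 1 ∨ l.length = 2 ∨ 3 ≤ l.length) with h1 | h1 | h1
  · exfalso; apply hne
    rw [← hx, ← hy, getElem_idx_eq l (show (0:ℕ) = l.length - 1 by omega) h0]
  · exfalso; apply hnadj
    rw [← hx, ← hy, getElem_idx_eq l (show l.length - 1 = 0 + 1 by omega) (by omega)]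
    exact chain'_adj h.1.1 (by omega)
  · exact h1

lemma IPath.internal_spec {S : Set V} {x y : V} {l : List V} (h : IPath G S x y l)
    {i : ℕ} (hi : i < l.length) (h0 : 0 < i) (h1 : i < l.length - 1) :
    l[i] ∈ S ∧ l[i] ≠ x ∧ l[i] ≠ y := by
  refine ⟨h.1.2.1 _ (List.getElem_mem hi), ?_, ?_⟩
  · rw [← walkB_head_eq h.1 (by omega)]
    exact h.nodup_get hi (by omega) (by omega)
  · rw [← walkB_last_eq h.1 (by omega)]
    exact h.nodup_get hi (by omega) (by omega)

/-- simpliciality of `v` relative to the vertex set `W`. -/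
def SimpIn (G : SimpleGraph V) (W : Finset V) (v : V) : Prop :=
  ∀ a ∈ W, ∀ b ∈ W, G.Adj v a → G.Adj v b → a ≠ b → G.Adj a b

lemma dirac_aux (hc : Chordal G) :
    ∀ (N : ℕ) (W : Finset V), W.card ≤ N → W.Nonempty →
      (∀ a ∈ W, ∀ b ∈ W, a ≠ b → G.Adj a b) ∨
      (∃ v ∈ W, ∃ w ∈ W, SimpIn G W v ∧ SimpIn G W w ∧ v ≠ w ∧ ¬ G.Adj v w) := by
  classical
  intro N
  induction N with
  | zero => intro W hcard hne; exact absurd (Finset.card_eq_zero.1 (by omega)) hne.ne_empty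
  | succ N ih =>
    intro W hcard hWne
    by_cases hcl : ∀ a ∈ W, ∀ b ∈ W, a ≠ b → G.Adj a b
    · exact Or.inl hcl
    · right
      push_neg at hcl
      obtain ⟨a, ha, b, hb, hab, hnadj⟩ := hcl
      -- separators exist
      have hsep0 : ((W.erase a).erase b) ⊆ W ∧ a ∉ ((W.erase a).erase b) ∧
          b ∉ ((W.erase a).erase b) ∧ ¬ ConnIn G (↑W \ ↑((W.erase a).erase b)) a b := by
        refine ⟨(Finset.erase_subset _ _).trans (Finset.erase_subset _ _), by simp,
          by simp [hab.symm], fun hconn => ?_⟩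
        have hsub : (↑W \ ↑((W.erase a).erase b) : Set V) ⊆ {a, b} := by
          intro v hv
          simp only [Finset.coe_erase, Set.mem_diff, Set.mem_singleton_iff,
            Finset.mem_coe, Set.mem_insert_iff] at hv ⊢
          by_contra hcon
          push_neg at hcon
          exact hv.2 ⟨⟨hv.1, hcon.1⟩, hcon.2⟩
        exact not_conn_pair hab hnadj (hconn.mono hsub)
      -- minimal separator
      obtain ⟨S, hSmem, hSmin⟩ := Finset.exists_min_image
        ((W.powerset).filter (fun S : Finset V => a ∉ S ∧ b ∉ S ∧ ¬ ConnIn G (↑W \ ↑S) a b))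
        Finset.card
        ⟨(W.erase a).erase b, by
          simp only [Finset.mem_filter, Finset.mem_powerset]
          exact ⟨hsep0.1, hsep0.2.1, hsep0.2.2.1, hsep0.2.2.2⟩⟩
      simp only [Finset.mem_filter, Finset.mem_powerset] at hSmem
      obtain ⟨hSW, haS, hbS, hSsep⟩ := hSmem
      set D : Set V := ↑W \ ↑S with hD
      have haD : a ∈ D := ⟨ha, haS⟩
      have hbD : b ∈ D := ⟨hb, hbS⟩
      -- no edges / equalities between the components of a and b
      have hABkey : ∀ u v : V, ConnIn G D a u → ConnIn G D b v → u ≠ v ∧ ¬ G.Adj u v := by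
        intro u v hu hv
        constructor
        · rintro rfl
          exact hSsep (hu.trans hv.symm)
        · intro hadj
          exact hSsep (hu.trans ((ConnIn.of_adj hu.mem_right hv.mem_right hadj).trans hv.symm))
      -- every separator vertex has a neighbor in each component
      have hNbr : ∀ s ∈ S, ∀ c ∈ ({a, b} : Set V),
          ∃ u, G.Adj u s ∧ ConnIn G D c u := by
        intro s hs c hcab
        simp only [Set.mem_insert_iff, Set.mem_singleton_iff] at hcab
        have hcW : c ∈ W := by rcases hcab with h' | h' <;> rw [h'] <;> assumption
        have hcS : c ∉ S := by rcases hcab with h' | h' <;> rw [h'] <;> assumption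
        have hless : (S.erase s).card < S.card := Finset.card_erase_lt_of_mem hs
        have hnotsep : ¬ (a ∉ S.erase s ∧ b ∉ S.erase s ∧
            ¬ ConnIn G (↑W \ ↑(S.erase s)) a b) := by
          intro hcon
          have : S.card ≤ (S.erase s).card := hSmin _ (by
            simp only [Finset.mem_filter, Finset.mem_powerset]
            exact ⟨(Finset.erase_subset _ _).trans hSW, hcon⟩)
          omega
        push_neg at hnotsep
        have hconn : ConnIn G (↑W \ ↑(S.erase s)) a b :=
          hnotsep (fun h => haS (Finset.mem_of_mem_erase h))
            (fun h => hbS (Finset.mem_of_mem_erase h))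
        have hseteq : (↑W \ ↑(S.erase s) : Set V) = D ∪ {s} := by
          ext v
          simp only [hD, Finset.coe_erase, Set.mem_diff, Set.mem_union,
            Set.mem_singleton_iff, Finset.mem_coe, Set.mem_singleton_iff]
          constructor
          · rintro ⟨hvW, hv2⟩
            by_cases hvs : v = s
            · exact Or.inr hvs
            · exact Or.inl ⟨hvW, fun hvS => hv2 ⟨hvS, hvs⟩⟩
          · rintro (⟨hvW, hvS⟩ | rfl)
            · exact ⟨hvW, fun h' => hvS h'.1⟩
            · exact ⟨hSW hs, fun h' => h'.2 rfl⟩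
        rw [hseteq] at hconn
        have hconn' : ConnIn G (D ∪ {s}) c (if c = a then b else a) := by
          rcases hcab with h' | h'
          · rw [if_pos h', h']
            exact hconn
          · have hba : c ≠ a := by rw [h']; exact fun h'' => hab h''.symm
            rw [if_neg hba, h']
            exact hconn.symm
        obtain ⟨l, hl⟩ := hconn'
        have hcs : c ≠ s := fun h => hcS (h ▸ hs)
        by_cases hsl : s ∈ l
        · obtain ⟨u, hu1, hu2, hu3⟩ := walk_exit l c hl hcs hsl
          exact ⟨u, hu2, hu3⟩
        · exfalso
          have : ConnIn G D c (if c = a then b else a) := by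
            refine ⟨l, hl.1, fun v hv => ?_, hl.2.2.1, hl.2.2.2⟩
            rcases hl.2.1 v hv with h' | h'
            · exact h'
            · exfalso
              apply hsl
              have hv' : v = s := by simpa using h'
              rwa [hv'] at hv
          rcases hcab with h' | h'
          · rw [if_pos h'] at this
            rw [h'] at this
            exact hSsep this
          · have hba : c ≠ a := by rw [h']; exact fun h'' => hab h''.symm
            rw [if_neg hba, h'] at this
            exact hSsep this.symm
      -- S is a clique
      have hSclique : ∀ s ∈ S, ∀ t ∈ S, s ≠ t → G.Adj s t := by
        intro s hs t ht hst
        by_contra hnadjst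
        obtain ⟨us, hus1, hus2⟩ := hNbr s hs a (by simp)
        obtain ⟨ut, hut1, hut2⟩ := hNbr t ht a (by simp)
        obtain ⟨vs, hvs1, hvs2⟩ := hNbr s hs b (by simp)
        obtain ⟨vt, hvt1, hvt2⟩ := hNbr t ht b (by simp)
        set A : Set V := {w | ConnIn G D a w} with hA
        set B : Set V := {w | ConnIn G D b w} with hB
        have hsA : s ∉ A := fun h => h.mem_right.2 hs
        have htA : t ∉ A := fun h => h.mem_right.2 ht
        have hsB : s ∉ B := fun h => h.mem_right.2 hs
        have htB : t ∉ B := fun h => h.mem_right.2 ht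
        have hconnA : ConnIn G (insert s (insert t A)) s t := by
          have h1 : ConnIn G A us ut := (hus2.to_component.symm).trans hut2.to_component
          have h2 : ConnIn G (insert s (insert t A)) us ut :=
            h1.mono (fun w hw => Set.mem_insert_of_mem _ (Set.mem_insert_of_mem _ hw))
          refine (ConnIn.of_adj ?_ ?_ hus1.symm).trans (h2.trans (ConnIn.of_adj ?_ ?_ hut1))
          · exact Set.mem_insert _ _
          · exact Set.mem_insert_of_mem _ (Set.mem_insert_of_mem _ hus2)
          · exact Set.mem_insert_of_mem _ (Set.mem_insert_of_mem _ hut2)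
          · exact Set.mem_insert_of_mem _ (Set.mem_insert _ _)
        have hconnB : ConnIn G (insert s (insert t B)) s t := by
          have h1 : ConnIn G B vs vt := (hvs2.to_component.symm).trans hvt2.to_component
          have h2 : ConnIn G (insert s (insert t B)) vs vt :=
            h1.mono (fun w hw => Set.mem_insert_of_mem _ (Set.mem_insert_of_mem _ hw))
          refine (ConnIn.of_adj ?_ ?_ hvs1.symm).trans (h2.trans (ConnIn.of_adj ?_ ?_ hvt1))
          · exact Set.mem_insert _ _
          · exact Set.mem_insert_of_mem _ (Set.mem_insert_of_mem _ hvs2)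
          · exact Set.mem_insert_of_mem _ (Set.mem_insert_of_mem _ hvt2)
          · exact Set.mem_insert_of_mem _ (Set.mem_insert _ _)
        obtain ⟨l₁, hl₁⟩ := exists_ipath hconnA
        obtain ⟨l₂, hl₂⟩ := exists_ipath hconnB
        have h3a := hl₁.three_le hst hnadjst
        have h3b := hl₂.three_le hst hnadjst
        have hintA : ∀ i : ℕ, ∀ hi : i < l₁.length, 0 < i → i < l₁.length - 1 →
            l₁[i] ∈ A := by
          intro i hi h0 h1
          obtain ⟨hm, hnx, hny⟩ := hl₁.internal_spec hi h0 h1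
          rcases hm with h' | hm
          · exact absurd h' hnx
          rcases hm with h' | hm
          · exact absurd h' hny
          · exact hm
        have hintB : ∀ j : ℕ, ∀ hj : j < l₂.length, 0 < j → j < l₂.length - 1 →
            l₂[j] ∈ B := by
          intro j hj h0 h1
          obtain ⟨hm, hnx, hny⟩ := hl₂.internal_spec hj h0 h1
          rcases hm with h' | hm
          · exact absurd h' hnx
          rcases hm with h' | hm
          · exact absurd h' hny
          · exact hm
        refine no_two_ipaths hc hl₁ hl₂ h3a h3b ?_
        intro i j hi hj hi0 hi1 hj0 hj1
        exact hABkey _ _ (hintA i hi hi0 hi1) (hintB j hj hj0 hj1)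
      -- main side claim : a simplicial vertex in each component
      have side : ∀ c, c ∈ D → ∃ v, ConnIn G D c v ∧ v ∈ W ∧ SimpIn G W v := by
        intro c hcD
        set C : Set V := {w | ConnIn G D c w} with hCdef
        have hCW : ∀ w ∈ C, w ∈ W := fun w hw => hw.mem_right.1
        -- a vertex of W outside C ∪ S
        have hd : ∃ d ∈ W, d ∉ C ∧ d ∉ S := by
          by_cases hac : a ∈ C
          · refine ⟨b, hb, fun hbc => ?_, hbS⟩
            · exact hSsep ((hac.symm).trans hbc)
          · exact ⟨a, ha, hac, haS⟩
        obtain ⟨d, hdW, hdC, hdS⟩ := hd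
        set W₁ : Finset V := (W.filter (· ∈ C)) ∪ S with hW₁
        have hW₁W : W₁ ⊆ W := by
          intro u hu
          rcases Finset.mem_union.1 hu with h' | h'
          · exact (Finset.mem_filter.1 h').1
          · exact hSW h'
        have hmemW₁ : ∀ u, u ∈ W₁ ↔ (u ∈ C ∨ u ∈ S) := by
          intro u
          rw [Finset.mem_union, Finset.mem_filter]
          constructor
          · rintro (⟨-, h'⟩ | h')
            · exact Or.inl h'
            · exact Or.inr h'
          · rintro (h' | h')
            · exact Or.inl ⟨hCW u h', h'⟩
            · exact Or.inr h'
        have hdW₁ : d ∉ W₁ := by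
          rw [hmemW₁]; rintro (h' | h')
          · exact hdC h'
          · exact hdS h'
        have hcardW₁ : W₁.card ≤ N := by
          have hss : W₁ ⊆ W.erase d := by
            intro u hu
            exact Finset.mem_erase.2 ⟨fun h' => hdW₁ (h' ▸ hu), hW₁W hu⟩
          have := Finset.card_le_card hss
          have := Finset.card_erase_of_mem hdW
          omega
        -- neighbors of C-vertices stay in W₁
        have hclosure : ∀ v ∈ C, ∀ u ∈ W, G.Adj v u → u ∈ W₁ := by
          intro v hv u hu hadj
          rw [hmemW₁]
          by_cases huS : u ∈ S
          · exact Or.inr huS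
          · exact Or.inl (hv.trans (ConnIn.of_adj hv.mem_right ⟨hu, huS⟩ hadj))
        have hcC : c ∈ C := ConnIn.refl hcD
        have hW₁ne : W₁.Nonempty := ⟨c, (hmemW₁ c).2 (Or.inl hcC)⟩
        rcases ih W₁ hcardW₁ hW₁ne with hclq | ⟨v, hvW₁, w, hwW₁, sv, sw, hvw, hnvw⟩
        · -- W₁ is a clique; c is simplicial in W
          refine ⟨c, ConnIn.refl hcD, hCW c hcC, ?_⟩
          intro p hp q hq hcp hcq hpq
          exact hclq p (hclosure c hcC p hp hcp) q (hclosure c hcC q hq hcq) hpq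
        · -- one of v, w lies in C
          have hvwC : v ∈ C ∨ w ∈ C := by
            rcases (hmemW₁ v).1 hvW₁ with h' | h'
            · exact Or.inl h'
            rcases (hmemW₁ w).1 hwW₁ with h'' | h''
            · exact Or.inr h''
            · exact absurd (hSclique v h' w h'' hvw) hnvw
          have hgen : ∀ z, z ∈ C → SimpIn G W₁ z → ∃ v', ConnIn G D c v' ∧ v' ∈ W ∧ SimpIn G W v' := by
            intro z hzC hz
            refine ⟨z, hzC, hCW z hzC, ?_⟩
            intro p hp q hq hzp hzq hpq
            exact hz p (hclosure z hzC p hp hzp) q (hclosure z hzC q hq hzq) hzp hzq hpq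
          rcases hvwC with h' | h'
          · exact hgen v h' sv
          · exact hgen w h' sw
      obtain ⟨vA, hvA1, hvA2, hvA3⟩ := side a haD
      obtain ⟨vB, hvB1, hvB2, hvB3⟩ := side b hbD
      have hkey := hABkey vA vB hvA1 hvB1
      exact ⟨vA, hvA2, vB, hvB2, hvA3, hvB3, hkey.1, hkey.2⟩

lemma exists_simplicial (hc : Chordal G) (W : Finset V) (hW : W.Nonempty) :
    ∃ v ∈ W, SimpIn G W v := by
  rcases dirac_aux hc W.card W le_rfl hW with hclq | ⟨v, hv, -, -, sv, -⟩
  · obtain ⟨v, hv⟩ := hW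
    exact ⟨v, hv, fun p hp q hq _ _ hpq => hclq p hp q hq hpq⟩
  · exact ⟨v, hv, sv⟩

lemma ConnIn.first_step {S : Set V} {x y : V} (h : ConnIn G S x y) (hne : x ≠ y) :
    ∃ u, u ∈ S ∧ G.Adj x u ∧ ConnIn G S u y := by
  obtain ⟨l, hw⟩ := h
  match l, hw.ne_nil with
  | h' :: t, _ =>
    have hx : h' = x := by have h3 := hw.2.2.1; simpa using h3
    match t with
    | [] =>
      exfalso
      have h4 := hw.2.2.2
      simp at h4
      exact hne (hx.symm.trans h4)
    | c :: t' =>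
      have hadj : G.Adj x c := by
        have := hw.1.rel_head; rwa [hx] at this
      refine ⟨c, hw.2.1 c (by simp), hadj, c :: t', hw.1.tail,
        fun u hu => hw.2.1 u (List.mem_cons_of_mem _ hu), rfl, ?_⟩
      rw [← hw.2.2.2, List.getLast?_cons_cons]

/-- Removing a simplicial vertex `v` preserves connectivity. -/
lemma conn_avoid {W : Finset V} {v : V}
    (hsimp : SimpIn G W v) {F : Set V} (hFW : F ⊆ ↑W) {x y : V}
    (h : ConnIn G F x y) (hx : x ≠ v) (hy : y ≠ v) : ConnIn G (F \ {v}) x y := by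
  obtain ⟨l0, hl0⟩ := h
  suffices H : ∀ n (l : List V), l.length ≤ n → WalkB G F x y l → ConnIn G (F \ {v}) x y from
    H l0.length l0 le_rfl hl0
  intro n
  induction n with
  | zero => intro l hl hw; have := walkB_pos hw; omega
  | succ n ih =>
    intro l hl hw
    by_cases hvl : v ∈ l
    · obtain ⟨i, hi, hiv⟩ := List.mem_iff_getElem.1 hvl
      have h0 := walkB_pos hw
      have hi0 : 0 < i := by
        rcases Nat.eq_zero_or_pos i with h' | h'
        · exfalso
          apply hx
          rw [← walkB_head_eq hw h0, ← hiv]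
          exact getElem_idx_eq l h'.symm h0
        · exact h'
      have hi1 : i < l.length - 1 := by
        rcases Nat.lt_or_ge i (l.length - 1) with h' | h'
        · exact h'
        · exfalso
          apply hy
          rw [← walkB_last_eq hw h0, ← getElem_idx_eq l (by omega : i = l.length - 1) hi]
          exact hiv
      have hadj1 : G.Adj l[i-1] v := by
        have := chain'_adj hw.1 (show (i-1) + 1 < l.length by omega)
        rwa [getElem_idx_eq l (show i - 1 + 1 = i by omega) (by omega), hiv] at this
      have hadj2 : G.Adj v (l[i+1]'(by omega)) := by
        have := chain'_adj hw.1 (show i + 1 < l.length by omega)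
        rwa [hiv] at this
      by_cases heq : l[i-1]'(by omega) = l[i+1]'(by omega)
      · obtain ⟨l', hw', hlen⟩ := splice hw (show i-1 < l.length by omega) (by omega : i+1 < l.length)
          (by omega) (Or.inr heq)
        exact ih l' (by omega) hw'
      · have hadj : G.Adj (l[i-1]'(by omega)) (l[i+1]'(by omega)) := by
          apply hsimp
          · exact hFW (hw.2.1 _ (List.getElem_mem _))
          · exact hFW (hw.2.1 _ (List.getElem_mem _))
          · exact hadj1.symm
          · exact hadj2
          · exact heq
        obtain ⟨l', hw', hlen⟩ := splice hw (show i-1 < l.length by omega) (by omega : i+1 < l.length)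
          (by omega) (Or.inl hadj)
        exact ih l' (by omega) hw'
    · refine ⟨l, hw.1, fun u hu => ⟨hw.2.1 u hu, fun h' => hvl ?_⟩, hw.2.2.1, hw.2.2.2⟩
      rw [Set.mem_singleton_iff] at h'
      rwa [h'] at hu

/-- `F₁` and `F₂` intersect or are joined by an edge. -/
def Touch (G : SimpleGraph V) (F₁ F₂ : Set V) : Prop :=
  ∃ u ∈ F₁, ∃ w ∈ F₂, u = w ∨ G.Adj u w

lemma helly (hc : Chordal G) :
    ∀ (N : ℕ) (W : Finset V) (𝓕 : Set (Set V)), W.card ≤ N →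
      (∀ F ∈ 𝓕, F.Nonempty) → (∀ F ∈ 𝓕, F ⊆ ↑W) →
      (∀ F ∈ 𝓕, ∀ x ∈ F, ∀ y ∈ F, ConnIn G F x y) →
      (∀ F₁ ∈ 𝓕, ∀ F₂ ∈ 𝓕, Touch G F₁ F₂) →
      ∃ Q : Set V, G.IsClique Q ∧ ∀ F ∈ 𝓕, (Q ∩ F).Nonempty := by
  classical
  intro N
  induction N with
  | zero =>
    intro W 𝓕 hcard h1 h2 h3 h4
    refine ⟨∅, by simp [SimpleGraph.IsClique, Set.Pairwise], fun F hF => ?_⟩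
    exfalso
    obtain ⟨z, hz⟩ := h1 F hF
    have := h2 F hF hz
    simp only [Finset.mem_coe] at this
    have hW : W = ∅ := Finset.card_eq_zero.1 (by omega)
    rw [hW] at this
    simp at this
  | succ N ih =>
    intro W 𝓕 hcard h1 h2 h3 h4
    by_cases h𝓕 : 𝓕.Nonempty
    swap
    · exact ⟨∅, by simp [SimpleGraph.IsClique, Set.Pairwise], fun F hF =>
        absurd ⟨F, hF⟩ h𝓕⟩
    obtain ⟨F₀, hF₀⟩ := h𝓕
    obtain ⟨z₀, hz₀⟩ := h1 F₀ hF₀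
    have hWne : W.Nonempty := ⟨z₀, h2 F₀ hF₀ hz₀⟩
    obtain ⟨v, hvW, hsimp⟩ := exists_simplicial hc W hWne
    by_cases hsing : ∃ F ∈ 𝓕, F = {v}
    · -- closed neighborhood of v
      refine ⟨{u | u ∈ (W : Set V) ∧ (u = v ∨ G.Adj v u)}, ?_, ?_⟩
      · intro u₁ hu₁ u₂ hu₂ hne
        obtain ⟨hu₁W, hu₁v⟩ := hu₁
        obtain ⟨hu₂W, hu₂v⟩ := hu₂
        rcases hu₁v with rfl | hadj₁
        · rcases hu₂v with rfl | hadj₂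
          · exact absurd rfl hne
          · exact hadj₂
        · rcases hu₂v with rfl | hadj₂
          · exact hadj₁.symm
          · exact hsimp u₁ hu₁W u₂ hu₂W hadj₁ hadj₂ hne
      · intro F hF
        obtain ⟨Fv, hFv, hFveq⟩ := hsing
        obtain ⟨u, hu, w, hw, hor⟩ := h4 F hF Fv hFv
        rw [hFveq, Set.mem_singleton_iff] at hw
        subst hw
        rcases hor with rfl | hadj
        · exact ⟨u, ⟨h2 F hF hu, Or.inl rfl⟩, hu⟩
        · exact ⟨u, ⟨h2 F hF hu, Or.inr hadj.symm⟩, hu⟩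
    · -- remove v
      push_neg at hsing
      have hnbr : ∀ F ∈ 𝓕, v ∈ F → ∃ u ∈ F \ {v}, G.Adj v u := by
        intro F hF hvF
        have hFne : (F \ {v}).Nonempty := by
          rcases Set.eq_empty_or_nonempty (F \ {v}) with h' | h'
          · exfalso
            apply hsing F hF
            have hsub : F ⊆ {v} := by
              intro u hu
              by_contra hne
              exact absurd ⟨u, hu, hne⟩ (Set.not_nonempty_iff_eq_empty.2 h')
            rcases Set.subset_singleton_iff_eq.1 hsub with h'' | h''
            · exact absurd (h'' ▸ hvF) (Set.notMem_empty v)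
            · exact h''
          · exact h'
        obtain ⟨z, hzF, hzv⟩ := hFne
        rw [Set.mem_singleton_iff] at hzv
        obtain ⟨u, huF, hadj, -⟩ := (h3 F hF v hvF z hzF).first_step (Ne.symm hzv)
        exact ⟨u, ⟨huF, fun h' => G.irrefl (by rwa [Set.mem_singleton_iff.1 h'] at hadj)⟩, hadj⟩
      set 𝓕' : Set (Set V) := (fun F => F \ {v}) '' 𝓕 with h𝓕'
      have hcard' : (W.erase v).card ≤ N := by
        have := Finset.card_erase_of_mem hvW
        omega
      have h1' : ∀ F' ∈ 𝓕', F'.Nonempty := by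
        rintro F' ⟨F, hF, rfl⟩
        rcases Set.eq_empty_or_nonempty (F \ {v}) with h' | h'
        · exfalso
          apply hsing F hF
          have hsub : F ⊆ {v} := fun u hu => by
            by_contra hne
            exact absurd ⟨u, hu, hne⟩ (Set.not_nonempty_iff_eq_empty.2 h')
          rcases Set.subset_singleton_iff_eq.1 hsub with h'' | h''
          · exact absurd (h'' ▸ (h1 F hF)) (by simp)
          · exact h''
        · exact h'
      have h2' : ∀ F' ∈ 𝓕', F' ⊆ ↑(W.erase v) := by
        rintro F' ⟨F, hF, rfl⟩ u ⟨huF, huv⟩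
        rw [Finset.coe_erase]
        exact ⟨h2 F hF huF, huv⟩
      have h3' : ∀ F' ∈ 𝓕', ∀ x ∈ F', ∀ y ∈ F', ConnIn G F' x y := by
        rintro F' ⟨F, hF, rfl⟩ x ⟨hxF, hxv⟩ y ⟨hyF, hyv⟩
        exact conn_avoid hsimp (h2 F hF) (h3 F hF x hxF y hyF)
          (by simpa using hxv) (by simpa using hyv)
      have h4' : ∀ F₁' ∈ 𝓕', ∀ F₂' ∈ 𝓕', Touch G F₁' F₂' := by
        rintro F₁' ⟨F₁, hF₁, rfl⟩ F₂' ⟨F₂, hF₂, rfl⟩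
        obtain ⟨u₁, hu₁, u₂, hu₂, hor⟩ := h4 F₁ hF₁ F₂ hF₂
        by_cases hu₁v : u₁ = v
        · obtain ⟨n₁, hn₁, hadj₁⟩ := hnbr F₁ hF₁ (hu₁v ▸ hu₁)
          rcases hor with heq | hadj
          · obtain ⟨n₂, hn₂, hadj₂⟩ := hnbr F₂ hF₂ ((heq.symm.trans hu₁v) ▸ hu₂)
            by_cases hnn : n₁ = n₂
            · exact ⟨n₁, hn₁, n₂, hn₂, Or.inl hnn⟩
            · exact ⟨n₁, hn₁, n₂, hn₂, Or.inr
                (hsimp n₁ (h2 F₁ hF₁ hn₁.1) n₂ (h2 F₂ hF₂ hn₂.1) hadj₁ hadj₂ hnn)⟩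
          · have hadj' : G.Adj v u₂ := hu₁v ▸ hadj
            have hu₂v : u₂ ≠ v := fun h' => G.irrefl (h' ▸ hadj')
            by_cases hnn : n₁ = u₂
            · exact ⟨n₁, hn₁, u₂, ⟨hu₂, hu₂v⟩, Or.inl hnn⟩
            · exact ⟨n₁, hn₁, u₂, ⟨hu₂, hu₂v⟩, Or.inr
                (hsimp n₁ (h2 F₁ hF₁ hn₁.1) u₂ (h2 F₂ hF₂ hu₂) hadj₁ hadj' hnn)⟩
        · by_cases hu₂v : u₂ = v
          · obtain ⟨n₂, hn₂, hadj₂⟩ := hnbr F₂ hF₂ (hu₂v ▸ hu₂)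
            rcases hor with heq | hadj
            · exact absurd (heq.trans hu₂v) hu₁v
            · have hadj' : G.Adj u₁ v := hu₂v ▸ hadj
              by_cases hnn : u₁ = n₂
              · exact ⟨u₁, ⟨hu₁, hu₁v⟩, n₂, hn₂, Or.inl hnn⟩
              · exact ⟨u₁, ⟨hu₁, hu₁v⟩, n₂, hn₂, Or.inr
                  (hsimp u₁ (h2 F₁ hF₁ hu₁) n₂ (h2 F₂ hF₂ hn₂.1) hadj'.symm hadj₂ hnn)⟩
          · exact ⟨u₁, ⟨hu₁, hu₁v⟩, u₂, ⟨hu₂, hu₂v⟩, hor⟩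
      obtain ⟨Q, hQclique, hQhit⟩ := ih (W.erase v) 𝓕' hcard' h1' h2' h3' h4'
      refine ⟨Q, hQclique, fun F hF => ?_⟩
      obtain ⟨q, hq1, hq2⟩ := hQhit (F \ {v}) ⟨F, hF, rfl⟩
      exact ⟨q, hq1, hq2.1⟩

lemma copy_2P3 {x y z u v w : V}
    (hxy : G.Adj x y) (hyz : G.Adj y z) (hxz : ¬ G.Adj x z)
    (huv : G.Adj u v) (hvw : G.Adj v w) (huw : ¬ G.Adj u w)
    (hd : x ≠ z) (hd2 : u ≠ w)
    (hc : ∀ p ∈ ({x,y,z} : Set V), ∀ q ∈ ({u,v,w} : Set V), p ≠ q ∧ ¬ G.Adj p q) :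
    HasInducedCopy G pat2P3 := by
  have hxu := hc x (by simp) u (by simp)
  have hxv := hc x (by simp) v (by simp)
  have hxw := hc x (by simp) w (by simp)
  have hyu := hc y (by simp) u (by simp)
  have hyv := hc y (by simp) v (by simp)
  have hyw := hc y (by simp) w (by simp)
  have hzu := hc z (by simp) u (by simp)
  have hzv := hc z (by simp) v (by simp)
  have hzw := hc z (by simp) w (by simp)
  have h1 : ∀ p ∈ ({x,y,z} : Set V), ∀ q ∈ ({u,v,w} : Set V), ¬ G.Adj p q := fun p hp q hq => (hc p hp q hq).2
  have hxu' : ¬ G.Adj x u := h1 x (by simp) u (by simp)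
  have hdxy := hxy.ne
  have hdyz := hyz.ne
  have hduv := huv.ne
  have hdvw := hvw.ne
  have hyx := hxy.symm
  have hzy := hyz.symm
  have hvu := huv.symm
  have hwv := hvw.symm
  have hzx : ¬ G.Adj z x := fun h => hxz h.symm
  have hwu : ¬ G.Adj w u := fun h => huw h.symm
  have hux : ¬ G.Adj u x := fun h => hxu.2 h.symm
  have hvx : ¬ G.Adj v x := fun h => hxv.2 h.symm
  have hwx : ¬ G.Adj w x := fun h => hxw.2 h.symm
  have huy : ¬ G.Adj u y := fun h => hyu.2 h.symm
  have hvy : ¬ G.Adj v y := fun h => hyv.2 h.symm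
  have hwy : ¬ G.Adj w y := fun h => hyw.2 h.symm
  have huz : ¬ G.Adj u z := fun h => hzu.2 h.symm
  have hvz : ¬ G.Adj v z := fun h => hzv.2 h.symm
  have hwz : ¬ G.Adj w z := fun h => hzw.2 h.symm
  have hxu2 := hxu.2
  have hxv2 := hxv.2
  have hxw2 := hxw.2
  have hyu2 := hyu.2
  have hyv2 := hyv.2
  have hyw2 := hyw.2
  have hzu2 := hzu.2
  have hzv2 := hzv.2
  have hzw2 := hzw.2
  have hd' : z ≠ x := hd.symm
  have hd2' : w ≠ u := hd2.symm
  have hdyx := hdxy.symm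
  have hdzy := hdyz.symm
  have hdvu := hduv.symm
  have hdwv := hdvw.symm
  have hxu1 := hxu.1
  have hxv1 := hxv.1
  have hxw1 := hxw.1
  have hyu1 := hyu.1
  have hyv1 := hyv.1
  have hyw1 := hyw.1
  have hzu1 := hzu.1
  have hzv1 := hzv.1
  have hzw1 := hzw.1
  have hux1 := hxu1.symm
  have hvx1 := hxv1.symm
  have hwx1 := hxw1.symm
  have huy1 := hyu1.symm
  have hvy1 := hyv1.symm
  have hwy1 := hyw1.symm
  have huz1 := hzu1.symm
  have hvz1 := hzv1.symm
  have hwz1 := hzw1.symm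
  refine ⟨![x, y, z, u, v, w], ?_, ?_⟩
  · intro i j hij
    fin_cases i <;> fin_cases j <;>
      simp only [Matrix.cons_val_zero, Matrix.cons_val_one, Matrix.head_cons,
        Matrix.cons_val_succ] at hij ⊢ <;>
      first | rfl | exact absurd hij (by assumption)
  · intro i j
    fin_cases i <;> fin_cases j <;>
      simp only [pat2P3, SimpleGraph.fromRel_adj, Matrix.cons_val_zero, Matrix.cons_val_one,
        Matrix.head_cons, Matrix.cons_val_succ] <;>
      constructor <;> intro h <;>
      first
        | assumption
        | decide
        | exact absurd h (by decide)
        | exact absurd h (by assumption)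
        | exact (G.irrefl h).elim

lemma copy_2K3 {x y z u v w : V}
    (hxy : G.Adj x y) (hyz : G.Adj y z) (hxz : G.Adj x z)
    (huv : G.Adj u v) (hvw : G.Adj v w) (huw : G.Adj u w)
    (hd : x ≠ z) (hd2 : u ≠ w)
    (hc : ∀ p ∈ ({x,y,z} : Set V), ∀ q ∈ ({u,v,w} : Set V), p ≠ q ∧ ¬ G.Adj p q) :
    HasInducedCopy G pat2K3 := by
  have hxu := hc x (by simp) u (by simp)
  have hxv := hc x (by simp) v (by simp)
  have hxw := hc x (by simp) w (by simp)
  have hyu := hc y (by simp) u (by simp)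
  have hyv := hc y (by simp) v (by simp)
  have hyw := hc y (by simp) w (by simp)
  have hzu := hc z (by simp) u (by simp)
  have hzv := hc z (by simp) v (by simp)
  have hzw := hc z (by simp) w (by simp)
  have h1 : ∀ p ∈ ({x,y,z} : Set V), ∀ q ∈ ({u,v,w} : Set V), ¬ G.Adj p q := fun p hp q hq => (hc p hp q hq).2
  have hxu' : ¬ G.Adj x u := h1 x (by simp) u (by simp)
  have hdxy := hxy.ne
  have hdyz := hyz.ne
  have hduv := huv.ne
  have hdvw := hvw.ne
  have hyx := hxy.symm
  have hzy := hyz.symm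
  have hvu := huv.symm
  have hwv := hvw.symm
  have hzx := hxz.symm
  have hwu := huw.symm
  have hux : ¬ G.Adj u x := fun h => hxu.2 h.symm
  have hvx : ¬ G.Adj v x := fun h => hxv.2 h.symm
  have hwx : ¬ G.Adj w x := fun h => hxw.2 h.symm
  have huy : ¬ G.Adj u y := fun h => hyu.2 h.symm
  have hvy : ¬ G.Adj v y := fun h => hyv.2 h.symm
  have hwy : ¬ G.Adj w y := fun h => hyw.2 h.symm
  have huz : ¬ G.Adj u z := fun h => hzu.2 h.symm
  have hvz : ¬ G.Adj v z := fun h => hzv.2 h.symm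
  have hwz : ¬ G.Adj w z := fun h => hzw.2 h.symm
  have hxu2 := hxu.2
  have hxv2 := hxv.2
  have hxw2 := hxw.2
  have hyu2 := hyu.2
  have hyv2 := hyv.2
  have hyw2 := hyw.2
  have hzu2 := hzu.2
  have hzv2 := hzv.2
  have hzw2 := hzw.2
  have hd' : z ≠ x := hd.symm
  have hd2' : w ≠ u := hd2.symm
  have hdyx := hdxy.symm
  have hdzy := hdyz.symm
  have hdvu := hduv.symm
  have hdwv := hdvw.symm
  have hxu1 := hxu.1
  have hxv1 := hxv.1
  have hxw1 := hxw.1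
  have hyu1 := hyu.1
  have hyv1 := hyv.1
  have hyw1 := hyw.1
  have hzu1 := hzu.1
  have hzv1 := hzv.1
  have hzw1 := hzw.1
  have hux1 := hxu1.symm
  have hvx1 := hxv1.symm
  have hwx1 := hxw1.symm
  have huy1 := hyu1.symm
  have hvy1 := hyv1.symm
  have hwy1 := hyw1.symm
  have huz1 := hzu1.symm
  have hvz1 := hzv1.symm
  have hwz1 := hzw1.symm
  refine ⟨![x, y, z, u, v, w], ?_, ?_⟩
  · intro i j hij
    fin_cases i <;> fin_cases j <;>
      simp only [Matrix.cons_val_zero, Matrix.cons_val_one, Matrix.head_cons,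
        Matrix.cons_val_succ] at hij ⊢ <;>
      first | rfl | exact absurd hij (by assumption)
  · intro i j
    fin_cases i <;> fin_cases j <;>
      simp only [pat2K3, SimpleGraph.fromRel_adj, Matrix.cons_val_zero, Matrix.cons_val_one,
        Matrix.head_cons, Matrix.cons_val_succ] <;>
      constructor <;> intro h <;>
      first
        | assumption
        | decide
        | exact absurd h (by decide)
        | exact absurd h (by assumption)
        | exact (G.irrefl h).elim

lemma copy_P3K3 {x y z u v w : V}
    (hxy : G.Adj x y) (hyz : G.Adj y z) (hxz : ¬ G.Adj x z)
    (huv : G.Adj u v) (hvw : G.Adj v w) (huw : G.Adj u w)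
    (hd : x ≠ z) (hd2 : u ≠ w)
    (hc : ∀ p ∈ ({x,y,z} : Set V), ∀ q ∈ ({u,v,w} : Set V), p ≠ q ∧ ¬ G.Adj p q) :
    HasInducedCopy G patP3K3 := by
  have hxu := hc x (by simp) u (by simp)
  have hxv := hc x (by simp) v (by simp)
  have hxw := hc x (by simp) w (by simp)
  have hyu := hc y (by simp) u (by simp)
  have hyv := hc y (by simp) v (by simp)
  have hyw := hc y (by simp) w (by simp)
  have hzu := hc z (by simp) u (by simp)
  have hzv := hc z (by simp) v (by simp)
  have hzw := hc z (by simp) w (by simp)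
  have h1 : ∀ p ∈ ({x,y,z} : Set V), ∀ q ∈ ({u,v,w} : Set V), ¬ G.Adj p q := fun p hp q hq => (hc p hp q hq).2
  have hxu' : ¬ G.Adj x u := h1 x (by simp) u (by simp)
  have hdxy := hxy.ne
  have hdyz := hyz.ne
  have hduv := huv.ne
  have hdvw := hvw.ne
  have hyx := hxy.symm
  have hzy := hyz.symm
  have hvu := huv.symm
  have hwv := hvw.symm
  have hzx : ¬ G.Adj z x := fun h => hxz h.symm
  have hwu := huw.symm
  have hux : ¬ G.Adj u x := fun h => hxu.2 h.symm
  have hvx : ¬ G.Adj v x := fun h => hxv.2 h.symm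
  have hwx : ¬ G.Adj w x := fun h => hxw.2 h.symm
  have huy : ¬ G.Adj u y := fun h => hyu.2 h.symm
  have hvy : ¬ G.Adj v y := fun h => hyv.2 h.symm
  have hwy : ¬ G.Adj w y := fun h => hyw.2 h.symm
  have huz : ¬ G.Adj u z := fun h => hzu.2 h.symm
  have hvz : ¬ G.Adj v z := fun h => hzv.2 h.symm
  have hwz : ¬ G.Adj w z := fun h => hzw.2 h.symm
  have hxu2 := hxu.2
  have hxv2 := hxv.2
  have hxw2 := hxw.2
  have hyu2 := hyu.2
  have hyv2 := hyv.2
  have hyw2 := hyw.2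
  have hzu2 := hzu.2
  have hzv2 := hzv.2
  have hzw2 := hzw.2
  have hd' : z ≠ x := hd.symm
  have hd2' : w ≠ u := hd2.symm
  have hdyx := hdxy.symm
  have hdzy := hdyz.symm
  have hdvu := hduv.symm
  have hdwv := hdvw.symm
  have hxu1 := hxu.1
  have hxv1 := hxv.1
  have hxw1 := hxw.1
  have hyu1 := hyu.1
  have hyv1 := hyv.1
  have hyw1 := hyw.1
  have hzu1 := hzu.1
  have hzv1 := hzv.1
  have hzw1 := hzw.1
  have hux1 := hxu1.symm
  have hvx1 := hxv1.symm
  have hwx1 := hxw1.symm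
  have huy1 := hyu1.symm
  have hvy1 := hyv1.symm
  have hwy1 := hyw1.symm
  have huz1 := hzu1.symm
  have hvz1 := hzv1.symm
  have hwz1 := hzw1.symm
  refine ⟨![x, y, z, u, v, w], ?_, ?_⟩
  · intro i j hij
    fin_cases i <;> fin_cases j <;>
      simp only [Matrix.cons_val_zero, Matrix.cons_val_one, Matrix.head_cons,
        Matrix.cons_val_succ] at hij ⊢ <;>
      first | rfl | exact absurd hij (by assumption)
  · intro i j
    fin_cases i <;> fin_cases j <;>
      simp only [patP3K3, SimpleGraph.fromRel_adj, Matrix.cons_val_zero, Matrix.cons_val_one,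
        Matrix.head_cons, Matrix.cons_val_succ] <;>
      constructor <;> intro h <;>
      first
        | assumption
        | decide
        | exact absurd h (by decide)
        | exact absurd h (by assumption)
        | exact (G.irrefl h).elim

/-- A connected triple: a path or triangle on `x, y, z` centred at `y`. -/
def Tri (G : SimpleGraph V) (x y z : V) : Prop :=
  x ≠ y ∧ x ≠ z ∧ y ≠ z ∧ G.Adj x y ∧ G.Adj y z

lemma forbidden (h2P3 : ¬ HasInducedCopy G pat2P3) (h2K3 : ¬ HasInducedCopy G pat2K3)
    (hP3K3 : ¬ HasInducedCopy G patP3K3) {x y z u v w : V}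
    (t1 : Tri G x y z) (t2 : Tri G u v w)
    (hcr : ∀ p ∈ ({x,y,z} : Set V), ∀ q ∈ ({u,v,w} : Set V), p ≠ q ∧ ¬ G.Adj p q) :
    False := by
  obtain ⟨hdxy, hdxz, hdyz, hxy, hyz⟩ := t1
  obtain ⟨hduv, hduw, hdvw, huv, hvw⟩ := t2
  have hcr' : ∀ p ∈ ({u,v,w} : Set V), ∀ q ∈ ({x,y,z} : Set V), p ≠ q ∧ ¬ G.Adj p q := by
    intro p hp q hq
    exact ⟨(hcr q hq p hp).1.symm, fun h => (hcr q hq p hp).2 h.symm⟩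
  by_cases hxz : G.Adj x z <;> by_cases huw : G.Adj u w
  · exact h2K3 (copy_2K3 hxy hyz hxz huv hvw huw hdxz hduw hcr)
  · exact hP3K3 (copy_P3K3 huv hvw huw hxy hyz hxz hduw hdxz hcr')
  · exact hP3K3 (copy_P3K3 hxy hyz hxz huv hvw huw hdxz hduw hcr)
  · exact h2P3 (copy_2P3 hxy hyz hxz huv hvw huw hdxz hduw hcr)

lemma Tri.conn {x y z : V} (h : Tri G x y z) :
    ∀ p ∈ ({x, y, z} : Set V), ∀ q ∈ ({x, y, z} : Set V), ConnIn G {x, y, z} p q := by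
  obtain ⟨hdxy, hdxz, hdyz, hxy, hyz⟩ := h
  have hxS : x ∈ ({x, y, z} : Set V) := by simp
  have hyS : y ∈ ({x, y, z} : Set V) := by simp
  have hzS : z ∈ ({x, y, z} : Set V) := by simp
  have c1 : ConnIn G {x, y, z} x y := ConnIn.of_adj hxS hyS hxy
  have c2 : ConnIn G {x, y, z} y z := ConnIn.of_adj hyS hzS hyz
  have c3 := c1.trans c2
  intro p hp q hq
  simp only [Set.mem_insert_iff, Set.mem_singleton_iff] at hp hq
  rcases hp with rfl | rfl | rfl <;> rcases hq with rfl | rfl | rfl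
  · exact ConnIn.refl hxS
  · exact c1
  · exact c3
  · exact c1.symm
  · exact ConnIn.refl hyS
  · exact c2
  · exact c3.symm
  · exact c2.symm
  · exact ConnIn.refl hzS

lemma tri_from_ipath {S : Set V} {x y : V} {l : List V} (h : IPath G S x y l)
    (h3 : 3 ≤ l.length) :
    ∃ a b c, Tri G a b c ∧ a ∈ S ∧ b ∈ S ∧ c ∈ S := by
  refine ⟨l[0]'(by omega), l[1]'(by omega), l[2]'(by omega),
    ⟨h.nodup_get (by omega) (by omega) (by omega),
     h.nodup_get (by omega) (by omega) (by omega),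
     h.nodup_get (by omega) (by omega) (by omega),
     chain'_adj h.1.1 (by omega),
     chain'_adj h.1.1 (by omega)⟩,
    h.1.2.1 _ (List.getElem_mem _), h.1.2.1 _ (List.getElem_mem _),
    h.1.2.1 _ (List.getElem_mem _)⟩

lemma ipath_short_adj {S : Set V} {x y : V} {l : List V} (h : IPath G S x y l)
    (hne : x ≠ y) (hlt : l.length < 3) : G.Adj x y := by
  have h0 := walkB_pos h.1
  have hlen : l.length = 2 := by
    rcases (by omega : l.length = 1 ∨ l.length = 2) with h' | h'
    · exfalso
      apply hne
      rw [← walkB_head_eq h.1 h0, ← walkB_last_eq h.1 h0]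
      exact getElem_idx_eq l (by omega) h0
    · exact h'
  rw [← walkB_head_eq h.1 h0, ← walkB_last_eq h.1 h0,
    getElem_idx_eq l (show l.length - 1 = 0 + 1 by omega) (by omega)]
  exact chain'_adj h.1.1 (by omega)

lemma tri_of_three {S : Set V} {x y z : V} (hxy : ConnIn G S x y) (hxz : ConnIn G S x z)
    (hdxy : x ≠ y) (hdxz : x ≠ z) (hdyz : y ≠ z) :
    ∃ a b c, Tri G a b c ∧ a ∈ S ∧ b ∈ S ∧ c ∈ S := by
  obtain ⟨l, hl⟩ := exists_ipath hxy
  rcases Nat.lt_or_ge l.length 3 with h3 | h3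
  · obtain ⟨m, hm⟩ := exists_ipath hxz
    rcases Nat.lt_or_ge m.length 3 with h3' | h3'
    · exact ⟨y, x, z, ⟨hdxy.symm, hdyz, hdxz,
        (ipath_short_adj hl hdxy h3).symm, ipath_short_adj hm hdxz h3'⟩,
        hxy.mem_right, hxy.mem_left, hxz.mem_right⟩
    · exact tri_from_ipath hm h3'
  · exact tri_from_ipath hl h3

/-- Reachability in an induced subgraph yields `ConnIn`. -/
lemma connIn_of_reachable {S : Set V} {a b : S}
    (h : (G.induce S).Reachable a b) : ConnIn G S (a : V) (b : V) := by
  obtain ⟨w⟩ := h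
  refine ⟨w.support.map Subtype.val, ?_, ?_, ?_, ?_⟩
  · rw [List.isChain_map]
    exact (SimpleGraph.Walk.isChain_adj_support w).imp (fun {p q} hpq => hpq)
  · intro v hv
    obtain ⟨v', -, rfl⟩ := List.mem_map.1 hv
    exact v'.2
  · rw [SimpleGraph.Walk.support_eq_cons]
    rfl
  · rw [List.getLast?_map, List.getLast?_eq_getLast (l := w.support) (by simp [SimpleGraph.Walk.support_ne_nil]),
      SimpleGraph.Walk.getLast_support]
    simp

end Aux

section Final

variable {V : Type*} [Fintype V] {G : SimpleGraph V}

lemma triple_comp_big {Q : Set V}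
    (hcomp : ∀ Z : Set V, IsCompOf G Qᶜ Z → Z.ncard ≤ 2) {x y z : V}
    (hxy : G.Adj x y) (hyz : G.Adj y z) (hdxz : x ≠ z)
    (hx : x ∈ Qᶜ) (hy : y ∈ Qᶜ) (hz : z ∈ Qᶜ) : False := by
  set x' : ↥(Qᶜ) := ⟨x, hx⟩
  set y' : ↥(Qᶜ) := ⟨y, hy⟩
  set z' : ↥(Qᶜ) := ⟨z, hz⟩
  have hxy' : (G.induce Qᶜ).Adj x' y' := hxy
  have hyz' : (G.induce Qᶜ).Adj y' z' := hyz
  set c := (G.induce Qᶜ).connectedComponentMk x' with hcdef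
  set Z : Set V := Subtype.val '' {v : ↥(Qᶜ) | (G.induce Qᶜ).connectedComponentMk v = c}
    with hZdef
  have hZ : IsCompOf G Qᶜ Z := ⟨c, rfl⟩
  have hxZ : x ∈ Z := ⟨x', rfl, rfl⟩
  have hyZ : y ∈ Z := ⟨y', SimpleGraph.ConnectedComponent.sound hxy'.reachable.symm, rfl⟩
  have hzZ : z ∈ Z := ⟨z',
    SimpleGraph.ConnectedComponent.sound (hxy'.reachable.trans hyz'.reachable).symm, rfl⟩
  have hsub : ({x, y, z} : Set V) ⊆ Z := by
    intro p hp
    simp only [Set.mem_insert_iff, Set.mem_singleton_iff] at hp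
    rcases hp with rfl | rfl | rfl <;> assumption
  have h3 : 3 ≤ Z.ncard := by
    calc 3 = ({x, y, z} : Set V).ncard :=
          (Set.ncard_eq_three.2 ⟨x, y, z, hxy.ne, hdxz, hyz.ne, rfl⟩).symm
      _ ≤ Z.ncard := Set.ncard_le_ncard hsub (Set.toFinite Z)
  have := hcomp Z hZ
  omega

lemma two_parts_contra {Q : Set V} (hQ : G.IsClique Q)
    (hcomp : ∀ Z : Set V, IsCompOf G Qᶜ Z → Z.ncard ≤ 2) {x y z u v w : V}
    (hxy : G.Adj x y) (hyz : G.Adj y z) (hdxz : x ≠ z)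
    (huv : G.Adj u v) (hvw : G.Adj v w) (hduw : u ≠ w)
    (hdisj : ∀ p ∈ ({x, y, z} : Set V), ∀ q ∈ ({u, v, w} : Set V), p ≠ q ∧ ¬ G.Adj p q) :
    False := by
  have hcases : (∀ p ∈ ({x, y, z} : Set V), p ∈ Qᶜ) ∨
      (∀ q ∈ ({u, v, w} : Set V), q ∈ Qᶜ) := by
    by_contra hcon
    push_neg at hcon
    obtain ⟨⟨p, hp, hpQ⟩, ⟨q, hq, hqQ⟩⟩ := hcon
    have hpQ' : p ∈ Q := by simpa using hpQ
    have hqQ' : q ∈ Q := by simpa using hqQ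
    exact (hdisj p hp q hq).2 (hQ hpQ' hqQ' (hdisj p hp q hq).1)
  rcases hcases with h' | h'
  · exact triple_comp_big hcomp hxy hyz hdxz (h' x (by simp)) (h' y (by simp)) (h' z (by simp))
  · exact triple_comp_big hcomp huv hvw hduw (h' u (by simp)) (h' v (by simp)) (h' w (by simp))

end Final

/-- A chordal graph is `(2P3, 2K3, P3+K3)`-free iff it has a clique `Q` such
that every connected component of `G[V \ Q]` has at most 2 vertices. -/
theorem stmt3 {V : Type*} [Fintype V] (G : SimpleGraph V) (hc : Chordal G) :
    (¬ HasInducedCopy G pat2P3 ∧ ¬ HasInducedCopy G pat2K3 ∧ ¬ HasInducedCopy G patP3K3) ↔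
      ∃ Q : Set V, G.IsClique Q ∧ ∀ Z : Set V, IsCompOf G Qᶜ Z → Z.ncard ≤ 2 := by
  classical
  constructor
  · rintro ⟨h1, h2, h3⟩
    set 𝓕 : Set (Set V) := {F | ∃ x y z, Aux.Tri G x y z ∧ F = {x, y, z}} with h𝓕
    obtain ⟨Q, hQclique, hQhit⟩ := Aux.helly hc Finset.univ.card Finset.univ 𝓕 le_rfl
      (by rintro F ⟨x, y, z, ht, rfl⟩; exact ⟨x, by simp⟩)
      (by rintro F ⟨x, y, z, ht, rfl⟩; intro p hp; simp)
      (by rintro F ⟨x, y, z, ht, rfl⟩; exact ht.conn)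
      (by
        rintro F₁ ⟨x, y, z, t1, rfl⟩ F₂ ⟨u, v, w, t2, rfl⟩
        by_contra hnt
        refine Aux.forbidden h1 h2 h3 t1 t2 ?_
        intro p hp q hq
        exact ⟨fun he => hnt ⟨p, hp, q, hq, Or.inl he⟩,
          fun hadj => hnt ⟨p, hp, q, hq, Or.inr hadj⟩⟩)
    refine ⟨Q, hQclique, ?_⟩
    intro Z hZ
    by_contra hle
    have h3le : 3 ≤ Z.ncard := by omega
    obtain ⟨T, hTZ, hT3⟩ := Set.exists_subset_card_eq h3le
    obtain ⟨x, y, z, hdxy, hdxz, hdyz, rfl⟩ := Set.ncard_eq_three.1 hT3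
    have hx : x ∈ Z := hTZ (by simp)
    have hy : y ∈ Z := hTZ (by simp)
    have hz : z ∈ Z := hTZ (by simp)
    obtain ⟨c, hZeq⟩ := hZ
    have hconn : ∀ p ∈ Z, ∀ q ∈ Z, Aux.ConnIn G (Qᶜ) p q := by
      intro p hp q hq
      rw [hZeq] at hp hq
      obtain ⟨p', hp', rfl⟩ := hp
      obtain ⟨q', hq', rfl⟩ := hq
      exact Aux.connIn_of_reachable
        (SimpleGraph.ConnectedComponent.exact (hp'.trans hq'.symm))
    obtain ⟨a, b, c', htri, ha, hb, hc'⟩ :=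
      Aux.tri_of_three (hconn x hx y hy) (hconn x hx z hz) hdxy hdxz hdyz
    obtain ⟨q, hq1, hq2⟩ := hQhit {a, b, c'} ⟨a, b, c', htri, rfl⟩
    simp only [Set.mem_insert_iff, Set.mem_singleton_iff] at hq2
    rcases hq2 with rfl | rfl | rfl
    · exact ha hq1
    · exact hb hq1
    · exact hc' hq1
  · rintro ⟨Q, hQclique, hcomp⟩
    have hdisj : ∀ (pat : SimpleGraph (Fin 6)) (f : Fin 6 → V), Function.Injective f →
        (∀ a b : Fin 6, G.Adj (f a) (f b) ↔ pat.Adj a b) →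
        (∀ a b : Fin 6, ¬ pat.Adj a b) →
        True := fun _ _ _ _ _ => trivial
    refine ⟨?_, ?_, ?_⟩
    · rintro ⟨f, hinj, hiff⟩
      refine two_parts_contra hQclique hcomp
        ((hiff 0 1).2 (by simp [pat2P3, SimpleGraph.fromRel_adj]))
        ((hiff 1 2).2 (by simp [pat2P3, SimpleGraph.fromRel_adj]))
        (fun h => absurd (hinj h) (by decide))
        ((hiff 3 4).2 (by simp [pat2P3, SimpleGraph.fromRel_adj]))
        ((hiff 4 5).2 (by simp [pat2P3, SimpleGraph.fromRel_adj]))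
        (fun h => absurd (hinj h) (by decide)) ?_
      intro p hp q hq
      simp only [Set.mem_insert_iff, Set.mem_singleton_iff] at hp hq
      have key : ∀ a b : Fin 6, ¬ pat2P3.Adj a b → a ≠ b →
          f a ≠ f b ∧ ¬ G.Adj (f a) (f b) := fun a b hnadj hne =>
        ⟨fun h => hne (hinj h), fun h => hnadj ((hiff a b).1 h)⟩
      rcases hp with rfl | rfl | rfl <;> rcases hq with rfl | rfl | rfl <;>
        exact key _ _ (by simp [pat2P3, SimpleGraph.fromRel_adj]) (by decide)
    · rintro ⟨f, hinj, hiff⟩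
      refine two_parts_contra hQclique hcomp
        ((hiff 0 1).2 (by simp [pat2K3, SimpleGraph.fromRel_adj]))
        ((hiff 1 2).2 (by simp [pat2K3, SimpleGraph.fromRel_adj]))
        (fun h => absurd (hinj h) (by decide))
        ((hiff 3 4).2 (by simp [pat2K3, SimpleGraph.fromRel_adj]))
        ((hiff 4 5).2 (by simp [pat2K3, SimpleGraph.fromRel_adj]))
        (fun h => absurd (hinj h) (by decide)) ?_
      intro p hp q hq
      simp only [Set.mem_insert_iff, Set.mem_singleton_iff] at hp hq
      have key : ∀ a b : Fin 6, ¬ pat2K3.Adj a b → a ≠ b →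
          f a ≠ f b ∧ ¬ G.Adj (f a) (f b) := fun a b hnadj hne =>
        ⟨fun h => hne (hinj h), fun h => hnadj ((hiff a b).1 h)⟩
      rcases hp with rfl | rfl | rfl <;> rcases hq with rfl | rfl | rfl <;>
        exact key _ _ (by simp [pat2K3, SimpleGraph.fromRel_adj]) (by decide)
    · rintro ⟨f, hinj, hiff⟩
      refine two_parts_contra hQclique hcomp
        ((hiff 0 1).2 (by simp [patP3K3, SimpleGraph.fromRel_adj]))
        ((hiff 1 2).2 (by simp [patP3K3, SimpleGraph.fromRel_adj]))
        (fun h => absurd (hinj h) (by decide))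
        ((hiff 3 4).2 (by simp [patP3K3, SimpleGraph.fromRel_adj]))
        ((hiff 4 5).2 (by simp [patP3K3, SimpleGraph.fromRel_adj]))
        (fun h => absurd (hinj h) (by decide)) ?_
      intro p hp q hq
      simp only [Set.mem_insert_iff, Set.mem_singleton_iff] at hp hq
      have key : ∀ a b : Fin 6, ¬ patP3K3.Adj a b → a ≠ b →
          f a ≠ f b ∧ ¬ G.Adj (f a) (f b) := fun a b hnadj hne =>
        ⟨fun h => hne (hinj h), fun h => hnadj ((hiff a b).1 h)⟩
      rcases hp with rfl | rfl | rfl <;> rcases hq with rfl | rfl | rfl <;>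
        exact key _ _ (by simp [patP3K3, SimpleGraph.fromRel_adj]) (by decide)
end

section
/- Let G be a chordal graph, let Q be a maximum clique of G, and let x, y be adjacent vertices outside Q each having a neighbor in Q. Then N(x) ∩ Q ⊆ N(y) ∩ Q or N(y) ∩ Q ⊆ N(x) ∩ Q; in particular, x and y have a common neighbor in Q and a common non-neighbor in Q. -/
open SimpleGraph

lemma cycle4aux {V : Type*} (G : SimpleGraph V) (hc : Chordal G)
    (x a b y : V) (hxa : G.Adj x a) (hab : G.Adj a b) (hby : G.Adj b y)
    (hyx : G.Adj y x) (hxb : ¬ G.Adj x b) (hay : ¬ G.Adj a y)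
    (hxb' : x ≠ b) (hay' : a ≠ y) : False := by
  have hxa' := hxa.ne
  have hab' := hab.ne
  have hby' := hby.ne
  have hyx' := hyx.ne
  apply hc 4 le_rfl ![x, a, b, y]
  refine ⟨?_, ?_⟩
  · intro i j hij
    fin_cases i <;> fin_cases j <;> simp_all
  · intro i j
    fin_cases i <;> fin_cases j <;>
      simp_all [G.adj_comm x a, G.adj_comm a b, G.adj_comm b y, G.adj_comm y x,
        G.adj_comm x b, G.adj_comm a y]

theorem stmt6 {V : Type*} [Fintype V] (G : SimpleGraph V) (hc : Chordal G)
    (Q : Set V) (hQ : IsMaxClique G Q) (x y : V) (hx : x ∉ Q) (hy : y ∉ Q)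
    (hxy : G.Adj x y) (hnx : ∃ q ∈ Q, G.Adj x q) (hny : ∃ q ∈ Q, G.Adj y q) :
    (G.neighborSet x ∩ Q ⊆ G.neighborSet y ∩ Q ∨
      G.neighborSet y ∩ Q ⊆ G.neighborSet x ∩ Q) ∧
    (∃ q ∈ Q, G.Adj x q ∧ G.Adj y q) ∧ (∃ q ∈ Q, ¬ G.Adj x q ∧ ¬ G.Adj y q) := by
  have hsub : G.neighborSet x ∩ Q ⊆ G.neighborSet y ∩ Q ∨
      G.neighborSet y ∩ Q ⊆ G.neighborSet x ∩ Q := by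
    by_contra h
    push_neg at h
    obtain ⟨h1, h2⟩ := h
    obtain ⟨a, ⟨hax, haQ⟩, ha⟩ := Set.not_subset.mp h1
    obtain ⟨b, ⟨hby, hbQ⟩, hb⟩ := Set.not_subset.mp h2
    simp only [Set.mem_inter_iff, SimpleGraph.mem_neighborSet, not_and] at ha hb
    have hay : ¬ G.Adj y a := fun h' => ha h' haQ
    have hbx : ¬ G.Adj x b := fun h' => hb h' hbQ
    have hab : G.Adj a b := hQ.1 haQ hbQ (by rintro rfl; exact hay hby)
    exact cycle4aux G hc x a b y hax hab hby.symm hxy.symm hbx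
      (fun h' => hay h'.symm) (by rintro rfl; exact hx hbQ) (by rintro rfl; exact hy haQ)
  have hQfin : Q.Finite := Set.toFinite Q
  have key : ∀ z w : V, z ∉ Q → w ∉ Q →
      (G.neighborSet z ∩ Q ⊆ G.neighborSet w ∩ Q) → (∃ q ∈ Q, G.Adj z q) →
      (∃ q ∈ Q, G.Adj z q ∧ G.Adj w q) ∧ (∃ q ∈ Q, ¬ G.Adj z q ∧ ¬ G.Adj w q) := by
    intro z w hz hw hss ⟨q, hqQ, hqz⟩
    constructor
    · exact ⟨q, hqQ, hqz, ((hss ⟨hqz, hqQ⟩).1 : G.Adj w q)⟩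
    · by_contra hno
      push_neg at hno
      have hall : ∀ p ∈ Q, G.Adj w p := by
        intro p hp
        by_cases hzp : G.Adj z p
        · exact (hss ⟨hzp, hp⟩).1
        · exact hno p hp hzp
      have hclique : G.IsClique (insert w Q) := by
        intro u hu v hv huv
        rcases hu with rfl | hu
        · rcases hv with rfl | hv
          · exact absurd rfl huv
          · exact hall v hv
        · rcases hv with rfl | hv
          · exact (hall u hu).symm
          · exact hQ.1 hu hv huv
      have hcard : Q.ncard < (insert w Q).ncard := by
        rw [Set.ncard_insert_of_notMem hw hQfin]
        omega
      exact absurd (hQ.2 _ hclique) (not_le.mpr hcard)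
  refine ⟨hsub, ?_⟩
  rcases hsub with hss | hss
  · exact key x y hx hy hss hnx
  · obtain ⟨h1, h2⟩ := key y x hy hx hss hny
    exact ⟨⟨h1.choose, h1.choose_spec.1, h1.choose_spec.2.2, h1.choose_spec.2.1⟩,
      ⟨h2.choose, h2.choose_spec.1, h2.choose_spec.2.2, h2.choose_spec.2.1⟩⟩
end

section
/- Let G be a chordal butterfly-free graph, let Q be a maximum clique of G, and let x, y be adjacent vertices outside Q each having a neighbor in Q. Then x and y have exactly one common non-neighbor in Q. -/
open SimpleGraph

lemma c4_false {V : Type*} (G : SimpleGraph V) (hc : Chordal G) (a b c d : V)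
    (hab : G.Adj a b) (hbc : G.Adj b c) (hcd : G.Adj c d) (hda : G.Adj d a)
    (hac : ¬ G.Adj a c) (hbd : ¬ G.Adj b d) (hac' : a ≠ c) (hbd' : b ≠ d) : False := by
  apply hc 4 le_rfl ![a,b,c,d]
  have hba := hab.symm; have hcb := hbc.symm; have hdc := hcd.symm; have had := hda.symm
  have hca : ¬ G.Adj c a := fun h => hac h.symm
  have hdb : ¬ G.Adj d b := fun h => hbd h.symm
  have h1 := hab.ne; have h2 := hbc.ne; have h3 := hcd.ne; have h4 := hda.ne.symm
  constructor
  · intro i j hij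
    fin_cases i <;> fin_cases j <;> simp_all
  · intro i j
    fin_cases i <;> fin_cases j <;> simp_all

lemma butterfly_copy {V : Type*} (G : SimpleGraph V) (x y p q r : V)
    (hxy : G.Adj x y) (hxp : G.Adj x p) (hyp : G.Adj y p)
    (hpq : G.Adj p q) (hpr : G.Adj p r) (hqr : G.Adj q r)
    (hxq : ¬ G.Adj x q) (hxr : ¬ G.Adj x r) (hyq : ¬ G.Adj y q) (hyr : ¬ G.Adj y r)
    (hxq' : x ≠ q) (hxr' : x ≠ r) (hyq' : y ≠ q) (hyr' : y ≠ r) :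
    HasInducedCopy G patButterfly := by
  refine ⟨![x, y, p, q, r], ?_, ?_⟩
  · have h1 := hxy.ne; have h2 := hxp.ne; have h3 := hyp.ne; have h4 := hpq.ne
    have h5 := hpr.ne; have h6 := hqr.ne
    intro i j hij
    fin_cases i <;> fin_cases j <;> simp_all
  · have hyx := hxy.symm; have hpx := hxp.symm; have hpy := hyp.symm
    have hqp := hpq.symm; have hrp := hpr.symm; have hrq := hqr.symm
    have hqx : ¬ G.Adj q x := fun h => hxq h.symm
    have hrx : ¬ G.Adj r x := fun h => hxr h.symm
    have hqy : ¬ G.Adj q y := fun h => hyq h.symm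
    have hry : ¬ G.Adj r y := fun h => hyr h.symm
    intro i j
    fin_cases i <;> fin_cases j <;> simp_all [patButterfly, SimpleGraph.fromRel_adj]

theorem stmt7 {V : Type*} [Fintype V] (G : SimpleGraph V) (hc : Chordal G)
    (hbf : ¬ HasInducedCopy G patButterfly)
    (Q : Set V) (hQ : IsMaxClique G Q) (x y : V) (hx : x ∉ Q) (hy : y ∉ Q)
    (hxy : G.Adj x y) (hnx : ∃ q ∈ Q, G.Adj x q) (hny : ∃ q ∈ Q, G.Adj y q) :
    ∃! q : V, q ∈ Q ∧ ¬ G.Adj x q ∧ ¬ G.Adj y q := by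
  obtain ⟨hQc, hQmax⟩ := hQ
  -- every vertex outside Q has a non-neighbor in Q
  have nonnbr : ∀ v : V, v ∉ Q → ∃ a ∈ Q, ¬ G.Adj v a := by
    intro v hv
    by_contra h
    push_neg at h
    have hclq : G.IsClique (insert v Q) :=
      hQc.insert (fun b hb _ => h b hb)
    have hcard : (insert v Q).ncard = Q.ncard + 1 :=
      Set.ncard_insert_of_notMem hv Q.toFinite
    have := hQmax _ hclq
    omega
  -- x and y have a common neighbor in Q
  obtain ⟨p, hpQ, hxp, hyp⟩ : ∃ p ∈ Q, G.Adj x p ∧ G.Adj y p := by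
    by_contra h
    push_neg at h
    obtain ⟨px, hpxQ, hxpx⟩ := hnx
    obtain ⟨py, hpyQ, hypy⟩ := hny
    have h1 : ¬ G.Adj y px := h px hpxQ hxpx
    have h2 : ¬ G.Adj x py := fun h' => h py hpyQ h' hypy
    have hne : px ≠ py := fun h' => h2 (h' ▸ hxpx)
    exact c4_false G hc x px py y hxpx (hQc hpxQ hpyQ hne) hypy.symm hxy.symm
      h2 (fun h'' => h1 h''.symm) (fun h' => hx (h' ▸ hpyQ)) (fun h' => hy (h'.symm ▸ hpxQ))
  -- existence of a common non-neighbor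
  obtain ⟨q, hqQ, hxq, hyq⟩ : ∃ q ∈ Q, ¬ G.Adj x q ∧ ¬ G.Adj y q := by
    by_contra h
    push_neg at h
    obtain ⟨a, haQ, hxa⟩ := nonnbr x hx
    obtain ⟨b, hbQ, hyb⟩ := nonnbr y hy
    have hya : G.Adj y a := h a haQ hxa
    have hxb : G.Adj x b := by
      by_contra h'
      exact hyb (h b hbQ h')
    have hne : a ≠ b := fun h' => hxa (h' ▸ hxb)
    exact c4_false G hc x y a b hxy hya (hQc haQ hbQ hne) hxb.symm
      hxa hyb (fun h' => hx (h' ▸ haQ)) (fun h' => hy (h' ▸ hbQ))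
  refine ⟨q, ⟨hqQ, hxq, hyq⟩, ?_⟩
  rintro r ⟨hrQ, hxr, hyr⟩
  by_contra hne
  have hpq : p ≠ q := fun h' => hxq (h' ▸ hxp)
  have hpr : p ≠ r := fun h' => hxr (h' ▸ hxp)
  exact hbf (butterfly_copy G x y p r q hxy hxp hyp (hQc hpQ hrQ hpr)
    (hQc hpQ hqQ hpq) (hQc hrQ hqQ hne) hxr hxq hyr hyq
    (fun h' => hx (h' ▸ hrQ)) (fun h' => hx (h' ▸ hqQ))
    (fun h' => hy (h' ▸ hrQ)) (fun h' => hy (h' ▸ hqQ)))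
end

section
/- Let G be a chordal butterfly-free graph, let Q be a maximum clique of G, and let x, y be adjacent vertices outside Q each having a neighbor in Q with N(x) ∩ Q ⊆ N(y) ∩ Q. Then y has exactly one non-neighbor in Q, and N(x) ∩ Q is a proper subset of N(y) ∩ Q. -/
open SimpleGraph

instance : DecidableRel patButterfly.Adj := fun a b =>
  decidable_of_iff _ (SimpleGraph.fromRel_adj _ a b).symm

lemma butterfly_of {V : Type*} (G : SimpleGraph V) (x y p q1 q2 : V)
    (hxy : G.Adj x y) (hyp : G.Adj y p) (hxp : G.Adj x p)
    (hpq1 : G.Adj p q1) (hpq2 : G.Adj p q2) (hq12 : G.Adj q1 q2)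
    (hxq1 : ¬ G.Adj x q1) (hxq2 : ¬ G.Adj x q2)
    (hyq1 : ¬ G.Adj y q1) (hyq2 : ¬ G.Adj y q2)
    (hxQ1 : x ≠ q1) (hxQ2 : x ≠ q2) (hyQ1 : y ≠ q1) (hyQ2 : y ≠ q2) :
    HasInducedCopy G patButterfly := by
  refine ⟨![x, y, p, q1, q2], ?_, ?_⟩
  · intro a b hab
    fin_cases a <;> fin_cases b <;>
      first
        | rfl
        | exact absurd hab hxy.ne | exact absurd hab hxy.ne.symm
        | exact absurd hab hyp.ne | exact absurd hab hyp.ne.symm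
        | exact absurd hab hxp.ne | exact absurd hab hxp.ne.symm
        | exact absurd hab hpq1.ne | exact absurd hab hpq1.ne.symm
        | exact absurd hab hpq2.ne | exact absurd hab hpq2.ne.symm
        | exact absurd hab hq12.ne | exact absurd hab hq12.ne.symm
        | exact absurd hab hxQ1 | exact absurd hab hxQ1.symm
        | exact absurd hab hxQ2 | exact absurd hab hxQ2.symm
        | exact absurd hab hyQ1 | exact absurd hab hyQ1.symm
        | exact absurd hab hyQ2 | exact absurd hab hyQ2.symm
  · intro a b
    fin_cases a <;> fin_cases b <;>
      first
        | exact iff_of_true hxy (by decide) | exact iff_of_true hxy.symm (by decide)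
        | exact iff_of_true hyp (by decide) | exact iff_of_true hyp.symm (by decide)
        | exact iff_of_true hxp (by decide) | exact iff_of_true hxp.symm (by decide)
        | exact iff_of_true hpq1 (by decide) | exact iff_of_true hpq1.symm (by decide)
        | exact iff_of_true hpq2 (by decide) | exact iff_of_true hpq2.symm (by decide)
        | exact iff_of_true hq12 (by decide) | exact iff_of_true hq12.symm (by decide)
        | exact iff_of_false hxq1 (by decide)
        | exact iff_of_false (fun h => hxq1 h.symm) (by decide)
        | exact iff_of_false hxq2 (by decide)
        | exact iff_of_false (fun h => hxq2 h.symm) (by decide)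
        | exact iff_of_false hyq1 (by decide)
        | exact iff_of_false (fun h => hyq1 h.symm) (by decide)
        | exact iff_of_false hyq2 (by decide)
        | exact iff_of_false (fun h => hyq2 h.symm) (by decide)
        | exact iff_of_false (G.irrefl) (by decide)

lemma exists_nonnbr {V : Type*} [Fintype V] (G : SimpleGraph V) (Q : Set V)
    (hQ : IsMaxClique G Q) (z : V) (hz : z ∉ Q) : ∃ q ∈ Q, ¬ G.Adj z q := by
  by_contra h
  push_neg at h
  have hcl : G.IsClique (insert z Q) := by
    intro a ha b hb hab
    rcases ha with rfl | ha <;> rcases hb with rfl | hb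
    · exact absurd rfl hab
    · exact h b hb
    · exact (h a ha).symm
    · exact hQ.1 ha hb hab
  have h1 := hQ.2 _ hcl
  have h2 : (insert z Q).ncard = Q.ncard + 1 := Set.ncard_insert_of_notMem hz (Set.toFinite Q)
  omega

theorem stmt8 {V : Type*} [Fintype V] (G : SimpleGraph V) (hc : Chordal G)
    (hbf : ¬ HasInducedCopy G patButterfly)
    (Q : Set V) (hQ : IsMaxClique G Q) (x y : V) (hx : x ∉ Q) (hy : y ∉ Q)
    (hxy : G.Adj x y) (hnx : ∃ q ∈ Q, G.Adj x q) (hny : ∃ q ∈ Q, G.Adj y q)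
    (hsub : G.neighborSet x ∩ Q ⊆ G.neighborSet y ∩ Q) :
    (∃! q : V, q ∈ Q ∧ ¬ G.Adj y q) ∧
      G.neighborSet x ∩ Q ⊂ G.neighborSet y ∩ Q := by
  obtain ⟨p, hpQ, hxp⟩ := hnx
  have hyp : G.Adj y p := (hsub ⟨hxp, hpQ⟩).1
  obtain ⟨q0, hq0Q, hq0⟩ := exists_nonnbr G Q hQ y hy
  have huniq : ∀ q1 ∈ Q, ¬ G.Adj y q1 → ∀ q2 ∈ Q, ¬ G.Adj y q2 → q1 = q2 := by
    intro q1 hq1 hyq1 q2 hq2 hyq2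
    by_contra hne
    apply hbf
    have hxq1 : ¬ G.Adj x q1 := fun h => hyq1 (hsub ⟨h, hq1⟩).1
    have hxq2 : ¬ G.Adj x q2 := fun h => hyq2 (hsub ⟨h, hq2⟩).1
    have hpq1 : G.Adj p q1 := hQ.1 hpQ hq1 (fun h => hyq1 (h ▸ hyp))
    have hpq2 : G.Adj p q2 := hQ.1 hpQ hq2 (fun h => hyq2 (h ▸ hyp))
    have hq12 : G.Adj q1 q2 := hQ.1 hq1 hq2 hne
    exact butterfly_of G x y p q1 q2 hxy hyp hxp hpq1 hpq2 hq12 hxq1 hxq2 hyq1 hyq2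
      (fun h => hx (h ▸ hq1)) (fun h => hx (h ▸ hq2))
      (fun h => hy (h ▸ hq1)) (fun h => hy (h ▸ hq2))
  refine ⟨⟨q0, ⟨hq0Q, hq0⟩, fun q hq => huniq q hq.1 hq.2 q0 hq0Q hq0⟩, hsub, fun hsub' => ?_⟩
  have hxall : ∀ q ∈ Q, q ≠ q0 → G.Adj x q := by
    intro q hq hne
    by_contra h
    have hyq : ¬ G.Adj y q := fun h' => h (hsub' ⟨h', hq⟩).1
    exact hne (huniq q hq hyq q0 hq0Q hq0)
  have hyall : ∀ q ∈ Q, q ≠ q0 → G.Adj y q := by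
    intro q hq hne
    by_contra h
    exact hne (huniq q hq h q0 hq0Q hq0)
  have hyD : y ∉ Q \ {q0} := fun h => hy h.1
  have hxI : x ∉ insert y (Q \ {q0}) := by
    rintro (rfl | h)
    · exact G.irrefl hxy
    · exact hx h.1
  have hcl : G.IsClique (insert x (insert y (Q \ {q0}))) := by
    rintro a (rfl | rfl | ha) b (rfl | rfl | hb) hab
    · exact absurd rfl hab
    · exact hxy
    · exact hxall b hb.1 (fun h => hb.2 (h ▸ rfl))
    · exact hxy.symm
    · exact absurd rfl hab
    · exact hyall b hb.1 (fun h => hb.2 (h ▸ rfl))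
    · exact (hxall a ha.1 (fun h => ha.2 (h ▸ rfl))).symm
    · exact (hyall a ha.1 (fun h => ha.2 (h ▸ rfl))).symm
    · exact hQ.1 ha.1 hb.1 hab
  have h1 := hQ.2 _ hcl
  have h2 : (insert y (Q \ {q0})).ncard = (Q \ {q0}).ncard + 1 :=
    Set.ncard_insert_of_notMem hyD (Set.toFinite _)
  have h3 : (insert x (insert y (Q \ {q0}))).ncard = (insert y (Q \ {q0})).ncard + 1 :=
    Set.ncard_insert_of_notMem hxI (Set.toFinite _)
  have h4 : (Q \ {q0}).ncard = Q.ncard - 1 :=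
    Set.ncard_diff_singleton_of_mem hq0Q
  have h5 : 0 < Q.ncard := (Set.ncard_pos (Set.toFinite Q)).mpr ⟨q0, hq0Q⟩
  omega
end
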